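/- arXiv:2410.21927 — 2 statements merged into one kernel-verified Lean document; each statement's English description precedes it below -/
import Mathlib

section
/- Stability of minimal solutions: Under the standing assumptions, let f ∈ C¹([0,∞)) satisfy hypotheses (H). For every 0 ≤ λ < λ*, the minimal bounded solution u_λ of problem (P(λf)) is stable. Furthermore, if a bounded minimal solution u* of (P(λ* f)) exists, then u* is also stable. -/
open MeasureTheory Set

/-- The `m`-boundary of a set `Ω`. -/
def mBoundary {X : Type*} [MeasurableSpace X] (m : X → MeasureTheory.Measure X)
    (Ω : Set X) : Set X :=
  {x | x ∉ Ω ∧ 0 < m x Ω}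

/-- The `m`-closure of a set `Ω`. -/
def mClosure {X : Type*} [MeasurableSpace X] (m : X → MeasureTheory.Measure X)
    (Ω : Set X) : Set X :=
  Ω ∪ mBoundary m Ω

/-- The nonlocal `m`-Laplacian. -/
noncomputable def deltaM {X : Type*} [MeasurableSpace X] (m : X → MeasureTheory.Measure X)
    (u : X → ℝ) (x : X) : ℝ :=
  ∫ y, (u y - u x) ∂(m x)

/-- `m` is a random walk: each `m x` is a probability measure and `x ↦ m x A` is measurable. -/
def IsRandomWalk {X : Type*} [MeasurableSpace X] (m : X → MeasureTheory.Measure X) : Prop :=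
  (∀ x, IsProbabilityMeasure (m x)) ∧
    ∀ A : Set X, MeasurableSet A → Measurable fun x => m x A

/-- `ν` is reversible with respect to the random walk `m`. -/
def Reversible {X : Type*} [MeasurableSpace X] (m : X → MeasureTheory.Measure X)
    (ν : MeasureTheory.Measure X) : Prop :=
  ∀ F : X → X → ℝ, Measurable (Function.uncurry F) → (∃ C, ∀ x y, |F x y| ≤ C) →
    ∫ x, (∫ y, F x y ∂(m x)) ∂ν = ∫ x, (∫ y, F y x ∂(m x)) ∂ν

/-- `Ω` is `m`-connected with respect to `ν`. -/
def mConnected {X : Type*} [MeasurableSpace X] (m : X → MeasureTheory.Measure X)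
    (ν : MeasureTheory.Measure X) (Ω : Set X) : Prop :=
  ∀ A B : Set X, MeasurableSet A → MeasurableSet B → A ⊆ Ω → B ⊆ Ω → A ∪ B = Ω →
    ν A ≠ 0 → ν B ≠ 0 → 0 < ∫ x in A, (m x B).toReal ∂ν

/-- Membership in `L²₀(Ω_m, ν)`: square integrable on `Ω_m`, vanishing `ν`-a.e. on the
`m`-boundary, extended by `0` outside `Ω_m`. -/
def MemL20 {X : Type*} [MeasurableSpace X] (m : X → MeasureTheory.Measure X)
    (ν : MeasureTheory.Measure X) (Ω : Set X) (u : X → ℝ) : Prop :=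
  Measurable u ∧ MeasureTheory.MemLp u 2 (ν.restrict (mClosure m Ω)) ∧
    (∀ᵐ x ∂(ν.restrict (mBoundary m Ω)), u x = 0) ∧ ∀ x ∉ mClosure m Ω, u x = 0

/-- The nonlocal Dirichlet energy `(1/2)∬_{Ω_m×Ω_m} |u(y)-u(x)|² dm_x(y) dν(x)`. -/
noncomputable def gradEnergy {X : Type*} [MeasurableSpace X] (m : X → MeasureTheory.Measure X)
    (ν : MeasureTheory.Measure X) (Ω : Set X) (u : X → ℝ) : ℝ :=
  (1 / 2) * ∫ x in mClosure m Ω, (∫ y in mClosure m Ω, (u y - u x) ^ 2 ∂(m x)) ∂ν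

/-- The standing assumptions of the paper: reversible random walk space, `Ω` `m`-connected with
`0 < ν(Ω) < ν(Ω_m) < ∞`, a 2-Poincaré inequality with first eigenvalue `lam = λ_m(Ω)` attained
by an eigenfunction `φ` with `0 < α ≤ φ ≤ M` a.e. on `Ω` and `φ = 0` on `∂_mΩ`. -/
structure Standing {X : Type*} [MeasurableSpace X] (m : X → MeasureTheory.Measure X)
    (ν : MeasureTheory.Measure X) (Ω : Set X) (lam : ℝ) (φ : X → ℝ) (α M : ℝ) : Prop where
  hrw : IsRandomWalk m
  hrev : Reversible m ν
  hsigma : MeasureTheory.SigmaFinite ν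
  hmeasΩ : MeasurableSet Ω
  hconn : mConnected m ν Ω
  hpos : 0 < ν Ω
  hlt : ν Ω < ν (mClosure m Ω)
  hfin : ν (mClosure m Ω) < ⊤
  hlamPos : 0 < lam
  hpoincare : ∀ u : X → ℝ, MemL20 m ν Ω u →
    lam * ∫ x in Ω, u x ^ 2 ∂ν ≤ gradEnergy m ν Ω u
  hphiMem : MemL20 m ν Ω φ
  heig : ∀ᵐ x ∂(ν.restrict Ω), -(deltaM m φ x) = lam * φ x
  halphaPos : 0 < α
  halphaM : α ≤ M
  hphiLB : ∀ᵐ x ∂(ν.restrict Ω), α ≤ φ x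
  hphiUB : ∀ᵐ x ∂(ν.restrict Ω), φ x ≤ M

/-- Essential boundedness on a set `S` with respect to `ν`. -/
def IsBdd {X : Type*} [MeasurableSpace X] (ν : MeasureTheory.Measure X) (S : Set X)
    (u : X → ℝ) : Prop :=
  ∃ C : ℝ, ∀ᵐ x ∂(ν.restrict S), |u x| ≤ C

/-- A (nonnegative) solution of the Gelfand-type problem `(P(λ f))`. -/
def IsSol {X : Type*} [MeasurableSpace X] (m : X → MeasureTheory.Measure X)
    (ν : MeasureTheory.Measure X) (Ω : Set X) (lam : ℝ) (f : ℝ → ℝ) (u : X → ℝ) : Prop :=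
  MemL20 m ν Ω u ∧ (∀ᵐ x ∂(ν.restrict (mClosure m Ω)), 0 ≤ u x) ∧
    ∀ᵐ x ∂(ν.restrict Ω), -(deltaM m u x) = lam * f (u x)

/-- A solution of `(P(λ f))` without a sign constraint. -/
def IsSolNS {X : Type*} [MeasurableSpace X] (m : X → MeasureTheory.Measure X)
    (ν : MeasureTheory.Measure X) (Ω : Set X) (lam : ℝ) (f : ℝ → ℝ) (u : X → ℝ) : Prop :=
  MemL20 m ν Ω u ∧ ∀ᵐ x ∂(ν.restrict Ω), -(deltaM m u x) = lam * f (u x)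

/-- A minimal solution of `(P(λ f))`. -/
def IsMinimalSol {X : Type*} [MeasurableSpace X] (m : X → MeasureTheory.Measure X)
    (ν : MeasureTheory.Measure X) (Ω : Set X) (lam : ℝ) (f : ℝ → ℝ) (u : X → ℝ) : Prop :=
  IsSol m ν Ω lam f u ∧
    ∀ v : X → ℝ, IsSol m ν Ω lam f v → ∀ᵐ x ∂(ν.restrict (mClosure m Ω)), u x ≤ v x

/-- The extremal parameter `λ*`. -/
noncomputable def lamStar {X : Type*} [MeasurableSpace X] (m : X → MeasureTheory.Measure X)
    (ν : MeasureTheory.Measure X) (Ω : Set X) (f : ℝ → ℝ) : ℝ :=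
  sSup {lam : ℝ | 0 ≤ lam ∧ ∃ u : X → ℝ, IsSol m ν Ω lam f u ∧ IsBdd ν (mClosure m Ω) u}

/-- Hypotheses (H) on the nonlinearity `f` with constant `c₁`. -/
def HypH (f : ℝ → ℝ) (c₁ : ℝ) : Prop :=
  ContinuousOn f (Set.Ici 0) ∧ MonotoneOn f (Set.Ici 0) ∧ 0 < f 0 ∧ 0 < c₁ ∧
    ∀ s : ℝ, 0 ≤ s → c₁ * s ≤ f s

/-- The stability quadratic form `Q_u(v)` with linearized potential `fp ∘ u` (where `fp = f'`). -/
noncomputable def Qform {X : Type*} [MeasurableSpace X] (m : X → MeasureTheory.Measure X)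
    (ν : MeasureTheory.Measure X) (Ω : Set X) (lam : ℝ) (fp : ℝ → ℝ) (u v : X → ℝ) : ℝ :=
  gradEnergy m ν Ω v - lam * ∫ x in Ω, fp (u x) * v x ^ 2 ∂ν

/-- Stability of a solution: `Q_u(v) ≥ 0` for all test functions `v ∈ L^∞ ∩ L²₀`. -/
def IsStable {X : Type*} [MeasurableSpace X] (m : X → MeasureTheory.Measure X)
    (ν : MeasureTheory.Measure X) (Ω : Set X) (lam : ℝ) (fp : ℝ → ℝ) (u : X → ℝ) : Prop :=
  ∀ v : X → ℝ, MemL20 m ν Ω v → IsBdd ν (mClosure m Ω) v → 0 ≤ Qform m ν Ω lam fp u v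

/-- The first eigenvalue `μ₁(u)` of the linearized operator, as an infimum of `Q_u` over
normalized test functions. -/
noncomputable def mu1 {X : Type*} [MeasurableSpace X] (m : X → MeasureTheory.Measure X)
    (ν : MeasureTheory.Measure X) (Ω : Set X) (lam : ℝ) (fp : ℝ → ℝ) (u : X → ℝ) : ℝ :=
  sInf {r : ℝ | ∃ v : X → ℝ, MemL20 m ν Ω v ∧ (∫ x in Ω, v x ^ 2 ∂ν) = 1 ∧
    r = Qform m ν Ω lam fp u v}

/-!
Let `u` be the minimal solution at `λ > 0` and let `λₖ ↑ λ`. Monotone iteration started at `0`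
and capped by the supersolution `u` gives solutions `Vₖ ≤ u` at `λₖ`, increasing in `k`; their
limit solves the problem at `λ`, so minimality forces `Vₖ → u`. The gap `u - Vₖ` is at least
`(λ - λₖ) f(0) > 0` and is a positive supersolution of the linearized equation with potential
`λₖ (f(u) - f(Vₖ)) / (u - Vₖ)`. For a reversible random walk Picone's inequality turns a positive
supersolution into the bound `∫ c v² ≤ (1/2) ∬ |∇v|²` for its potential `c`, and as `k → ∞`
the difference quotients tend to `f'(u)`.

All functions are first replaced by bounded representatives: by reversibility a `ν`-null set is
`m_x`-null for `ν`-a.e. `x`, so this changes neither `Δ_m u` nor the energy.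
-/

open ProbabilityTheory Filter Topology

section

variable {X : Type*} [MeasurableSpace X] {m : X → Measure X} {ν : Measure X} {Ω S : Set X}

lemma abs_le_of_mem_Icc_zero {a C : ℝ} (h : a ∈ Icc 0 C) : |a| ≤ C :=
  abs_le.mpr ⟨by linarith [h.1, h.2], h.2⟩

lemma sq_le_sq_of_abs_le {a C : ℝ} (h : |a| ≤ C) : a ^ 2 ≤ C ^ 2 :=
  (sq_abs a).symm.trans_le (pow_le_pow_left₀ (abs_nonneg a) h 2)

namespace IsRandomWalk

noncomputable def kernel (hm : IsRandomWalk m) : Kernel X X :=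
  ⟨m, Measure.measurable_of_measurable_coe m hm.2⟩

instance (hm : IsRandomWalk m) : IsMarkovKernel hm.kernel := ⟨hm.1⟩

@[simp]
lemma kernel_apply (hm : IsRandomWalk m) (x : X) : hm.kernel x = m x := rfl

lemma integrable_of_abs_le (hm : IsRandomWalk m) {g : X → ℝ} {C : ℝ} (hg : Measurable g)
    (hgC : ∀ y, |g y| ≤ C) (x : X) : Integrable g (m x) :=
  have := hm.1 x
  .of_bound hg.aestronglyMeasurable C (ae_of_all _ hgC)

lemma abs_setIntegral_le (hm : IsRandomWalk m) {g : X → ℝ} {C : ℝ} (hgC : ∀ y, |g y| ≤ C)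
    (x : X) : |∫ y in S, g y ∂m x| ≤ C := by
  have := hm.1 x
  have hC : 0 ≤ C := (abs_nonneg _).trans (hgC x)
  calc |∫ y in S, g y ∂m x| ≤ C * (m x).real S := by
        simpa using norm_setIntegral_le_of_norm_le_const (measure_lt_top _ _)
          fun y _ => (Real.norm_eq_abs (g y)).trans_le (hgC y)
    _ ≤ C := mul_le_of_le_one_right hC measureReal_le_one

lemma measurable_integral (hm : IsRandomWalk m) {H : X → X → ℝ}
    (hH : Measurable (Function.uncurry H)) : Measurable fun x => ∫ y, H x y ∂m x :=
  (hH.stronglyMeasurable.integral_kernel_prod_right (κ := hm.kernel)).measurable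

lemma measurable_setIntegral (hm : IsRandomWalk m) (hS : MeasurableSet S) {H : X → X → ℝ}
    (hH : Measurable (Function.uncurry H)) : Measurable fun x => ∫ y in S, H x y ∂m x :=
  (hH.stronglyMeasurable.integral_kernel_prod_right (κ := hm.kernel.restrict hS)).measurable

lemma measurableSet_mBoundary (hm : IsRandomWalk m) (hΩ : MeasurableSet Ω) :
    MeasurableSet (mBoundary m Ω) :=
  hΩ.compl.inter (measurableSet_lt measurable_const (hm.2 Ω hΩ))

lemma measurableSet_mClosure (hm : IsRandomWalk m) (hΩ : MeasurableSet Ω) :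
    MeasurableSet (mClosure m Ω) :=
  hΩ.union (hm.measurableSet_mBoundary hΩ)

noncomputable def edgeMeasure (hm : IsRandomWalk m) (ν : Measure X) (hS : MeasurableSet S) :
    Measure (X × X) :=
  ν.restrict S ⊗ₘ hm.kernel.restrict hS

variable (hm : IsRandomWalk m) (hS : MeasurableSet S) [IsFiniteMeasure (ν.restrict S)]

instance : IsFiniteMeasure (hm.edgeMeasure ν hS) := by
  unfold edgeMeasure; infer_instance

lemma integral_edgeMeasure {G : X × X → ℝ} (hG : Integrable G (hm.edgeMeasure ν hS)) :
    ∫ p, G p ∂hm.edgeMeasure ν hS = ∫ x in S, ∫ y in S, G (x, y) ∂m x ∂ν := by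
  rw [edgeMeasure, Measure.integral_compProd hG]
  rfl

lemma integral_integral_indicator_eq_integral_edgeMeasure {G : X × X → ℝ} (hG : Measurable G)
    {C : ℝ} (hGC : ∀ p, |G p| ≤ C) :
    ∫ x, ∫ y, (S ×ˢ S).indicator G (x, y) ∂m x ∂ν = ∫ p, G p ∂hm.edgeMeasure ν hS := by
  rw [hm.integral_edgeMeasure hS (.of_bound hG.aestronglyMeasurable C (ae_of_all _ hGC)),
    ← integral_indicator hS]
  refine integral_congr_ae (ae_of_all _ fun x => ?_)
  by_cases hx : x ∈ S
  · rw [indicator_of_mem hx, ← integral_indicator hS]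
    refine integral_congr_ae (ae_of_all _ fun y => ?_)
    by_cases hy : y ∈ S <;> simp [hx, hy]
  · simp [hx]

end IsRandomWalk

/-! ### Consequences of reversibility -/

namespace Reversible

lemma map_swap_edgeMeasure (hrev : Reversible m ν) (hm : IsRandomWalk m) (hS : MeasurableSet S)
    [IsFiniteMeasure (ν.restrict S)] :
    (hm.edgeMeasure ν hS).map Prod.swap = hm.edgeMeasure ν hS := by
  ext A hA
  rw [Measure.map_apply measurable_swap hA]
  have hreal : ∀ B, MeasurableSet B → (hm.edgeMeasure ν hS).real B
      = ∫ x, ∫ y, (S ×ˢ S).indicator (B.indicator 1) (x, y) ∂m x ∂ν := fun B hB => by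
    rw [hm.integral_integral_indicator_eq_integral_edgeMeasure hS (measurable_one.indicator hB)
      (C := 1) fun p => by by_cases hp : p ∈ B <;> simp [hp], integral_indicator_one hB]
  have hswap := hrev (fun x y => (S ×ˢ S).indicator (A.indicator 1) (x, y))
    ((measurable_one.indicator hA).indicator (hS.prod hS))
    ⟨1, fun x y => by simp only [indicator]; split_ifs <;> simp⟩
  refine (ENNReal.toReal_eq_toReal_iff' (measure_ne_top _ _) (measure_ne_top _ _)).mp ?_
  change (hm.edgeMeasure ν hS).real _ = (hm.edgeMeasure ν hS).real _
  rw [hreal _ (measurable_swap hA), hreal _ hA, hswap]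
  congr 1 with x
  congr 1 with y
  by_cases hxy : (x, y) ∈ S ×ˢ S
  · rw [indicator_of_mem hxy, indicator_of_mem (show (y, x) ∈ S ×ˢ S from ⟨hxy.2, hxy.1⟩)]
    rfl
  · rw [indicator_of_notMem hxy, indicator_of_notMem fun h => hxy ⟨h.2, h.1⟩]

lemma ae_ae_restrict (hrev : Reversible m ν) (hm : IsRandomWalk m) (hS : MeasurableSet S)
    [IsFiniteMeasure (ν.restrict S)] {P : X → Prop} (hP : MeasurableSet {x | P x})
    (h : ∀ᵐ x ∂ν.restrict S, P x) : ∀ᵐ x ∂ν.restrict S, ∀ᵐ y ∂(m x).restrict S, P y := by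
  have h₁ : ∀ᵐ p ∂hm.edgeMeasure ν hS, P p.1 :=
    Measure.ae_compProd_of_ae_ae (measurable_fst hP) (h.mono fun x hx => ae_of_all _ fun _ => hx)
  have h₂ : ∀ᵐ p ∂hm.edgeMeasure ν hS, P p.2 := by
    rw [← hrev.map_swap_edgeMeasure hm hS]
    exact (ae_map_iff measurable_swap.aemeasurable (measurable_snd hP)).mpr h₁
  simpa [Kernel.restrict_apply] using Measure.ae_ae_of_ae_compProd h₂

lemma ae_measure_mClosure_eq_one (hrev : Reversible m ν) (hm : IsRandomWalk m)
    (hΩ : MeasurableSet Ω) [IsFiniteMeasure (ν.restrict Ω)] :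
    ∀ᵐ x ∂ν.restrict Ω, m x (mClosure m Ω) = 1 := by
  set S := mClosure m Ω
  have hS : MeasurableSet S := hm.measurableSet_mClosure hΩ
  have hswap := hrev (fun x y => Ω.indicator 1 x * Sᶜ.indicator 1 y)
    (((measurable_one.indicator hΩ).comp measurable_fst).mul
      ((measurable_one.indicator hS.compl).comp measurable_snd))
    ⟨1, fun x y => by by_cases hx : x ∈ Ω <;> by_cases hy : y ∈ S <;> simp [hx, hy]⟩
  have hL : ∀ x, ∫ y, Ω.indicator (1 : X → ℝ) x * Sᶜ.indicator 1 y ∂m x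
      = Ω.indicator (fun x => (m x).real Sᶜ) x := fun x => by
    by_cases hx : x ∈ Ω <;> simp [hx, integral_indicator_one hS.compl]
  have hR : ∀ x, ∫ y, Ω.indicator (1 : X → ℝ) y * Sᶜ.indicator 1 x ∂m x = 0 := fun x => by
    by_cases hx : x ∈ S
    · simp [hx]
    · have h0 : m x Ω = 0 :=
        nonpos_iff_eq_zero.mp (not_lt.mp fun h => hx (Or.inr ⟨fun h' => hx (Or.inl h'), h⟩))
      simp [hx, integral_indicator_one hΩ, measureReal_def, h0]
  simp only [hL, hR, integral_zero, integral_indicator hΩ] at hswap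
  have hint : Integrable (fun x => (m x).real Sᶜ) (ν.restrict Ω) :=
    .of_bound (((hm.2 _ hS.compl).ennreal_toReal).aestronglyMeasurable) 1
      (ae_of_all _ fun x => by
        have := hm.1 x
        rw [Real.norm_of_nonneg measureReal_nonneg]
        exact measureReal_le_one)
  filter_upwards [(setIntegral_eq_zero_iff_of_nonneg_ae (ae_of_all _ fun x => measureReal_nonneg)
    hint).mp hswap] with x hx
  have := hm.1 x
  exact (prob_compl_eq_zero_iff hS).mp ((measureReal_eq_zero_iff (measure_ne_top _ _)).mp hx)

end Reversible

lemma isFiniteMeasure_restrict_of_mClosure [IsFiniteMeasure (ν.restrict (mClosure m Ω))] :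
    IsFiniteMeasure (ν.restrict Ω) :=
  isFiniteMeasure_of_le (ν.restrict (mClosure m Ω))
    (Measure.restrict_mono subset_union_left le_rfl)

lemma deltaM_eq_integral_sub (hm : IsRandomWalk m) {u : X → ℝ} {C : ℝ} (hu : Measurable u)
    (huC : ∀ y, |u y| ≤ C) (x : X) : deltaM m u x = ∫ y, u y ∂m x - u x := by
  have := hm.1 x
  rw [deltaM, integral_sub (hm.integrable_of_abs_le hu huC x) (integrable_const _)]
  simp

lemma deltaM_congr_ae (hrev : Reversible m ν) (hm : IsRandomWalk m) (hS : MeasurableSet S)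
    [IsFiniteMeasure (ν.restrict S)] {u u' : X → ℝ} (hu : Measurable u) (hu' : Measurable u')
    (h : u =ᵐ[ν.restrict S] u') (hout : ∀ x ∉ S, u x = u' x) :
    ∀ᵐ x ∂ν.restrict S, deltaM m u x = deltaM m u' x := by
  filter_upwards [hrev.ae_ae_restrict hm hS (measurableSet_eq_fun hu hu') h, h] with x hx hux
  have hall : ∀ᵐ y ∂m x, u y = u' y := by
    rw [← Measure.restrict_add_restrict_compl (μ := m x) hS, ae_add_measure_iff]
    exact ⟨hx, ae_restrict_of_forall_mem hS.compl hout⟩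
  exact integral_congr_ae (hall.mono fun y hy => by simp only [hy, hux])

lemma gradEnergy_nonneg {v : X → ℝ} : 0 ≤ gradEnergy m ν Ω v :=
  mul_nonneg (by norm_num) (integral_nonneg fun _ => integral_nonneg fun _ => sq_nonneg _)

lemma gradEnergy_congr_ae (hrev : Reversible m ν) (hm : IsRandomWalk m) (hΩ : MeasurableSet Ω)
    [IsFiniteMeasure (ν.restrict (mClosure m Ω))] {v v' : X → ℝ} (hv : Measurable v)
    (hv' : Measurable v') (h : v =ᵐ[ν.restrict (mClosure m Ω)] v') :
    gradEnergy m ν Ω v = gradEnergy m ν Ω v' := by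
  have hS := hm.measurableSet_mClosure hΩ
  unfold gradEnergy
  congr 1
  refine integral_congr_ae ?_
  filter_upwards [hrev.ae_ae_restrict hm hS (measurableSet_eq_fun hv hv') h, h] with x hx hvx
  exact integral_congr_ae (hx.mono fun y hy => by simp only [hy, hvx])

/-! ### Picone's inequality -/

lemma picone_ineq {a b s t : ℝ} (hs : 0 < s) (ht : 0 < t) :
    a ^ 2 / s * (s - t) + b ^ 2 / t * (t - s) ≤ (b - a) ^ 2 := by
  rw [div_mul_eq_mul_div, div_mul_eq_mul_div, div_add_div _ _ hs.ne' ht.ne',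
    div_le_iff₀ (mul_pos hs ht)]
  nlinarith [sq_nonneg (a * t - b * s)]

theorem integral_picone_le {ρ : Measure (X × X)} (hρ : ρ.map Prod.swap = ρ) {v w : X → ℝ}
    (hw : ∀ x, 0 < w x)
    (hG : Integrable (fun p : X × X => v p.1 ^ 2 / w p.1 * (w p.1 - w p.2)) ρ)
    (hv : Integrable (fun p : X × X => (v p.2 - v p.1) ^ 2) ρ) :
    ∫ p, v p.1 ^ 2 / w p.1 * (w p.1 - w p.2) ∂ρ ≤ 1 / 2 * ∫ p, (v p.2 - v p.1) ^ 2 ∂ρ := by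
  set G : X × X → ℝ := fun p => v p.1 ^ 2 / w p.1 * (w p.1 - w p.2)
  have hGswap : Integrable (fun p => G p.swap) ρ := by
    rw [← hρ] at hG
    exact hG.comp_measurable measurable_swap
  have hswap : ∫ p, G p.swap ∂ρ = ∫ p, G p ∂ρ := by
    conv_rhs => rw [← hρ]
    rw [integral_map measurable_swap.aemeasurable (hρ.symm ▸ hG.aestronglyMeasurable)]
  have hsum : ∫ p, G p + G p.swap ∂ρ ≤ ∫ p, (v p.2 - v p.1) ^ 2 ∂ρ :=
    integral_mono (hG.add hGswap) hv fun p => picone_ineq (hw p.1) (hw p.2)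
  rw [integral_add hG hGswap, hswap] at hsum
  linarith

theorem setIntegral_picone_le_gradEnergy (hrev : Reversible m ν) (hm : IsRandomWalk m)
    (hΩ : MeasurableSet Ω) [IsFiniteMeasure (ν.restrict (mClosure m Ω))] {v w : X → ℝ}
    {δ C : ℝ} (hv : Measurable v) (hvC : ∀ x, |v x| ≤ C) (hw : Measurable w) (hδ : 0 < δ)
    (hwδ : ∀ x, δ ≤ w x) (hwC : ∀ x, w x ≤ C) :
    ∫ x in mClosure m Ω, v x ^ 2 / w x * ∫ y in mClosure m Ω, (w x - w y) ∂m x ∂ν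
      ≤ gradEnergy m ν Ω v := by
  have hS := hm.measurableSet_mClosure hΩ
  have hG : Integrable (fun p : X × X => v p.1 ^ 2 / w p.1 * (w p.1 - w p.2))
      (hm.edgeMeasure ν hS) := by
    refine .of_bound (by fun_prop) (C ^ 2 / δ * C) (ae_of_all _ fun p => ?_)
    rw [Real.norm_eq_abs, abs_mul, abs_div, abs_of_pos (hδ.trans_le (hwδ _)),
      abs_of_nonneg (sq_nonneg _)]
    exact mul_le_mul (div_le_div₀ (sq_nonneg C) (sq_le_sq_of_abs_le (hvC _)) hδ (hwδ _))
      (abs_sub_le_iff.mpr ⟨by linarith [hwC p.1, hwδ p.2], by linarith [hwC p.2, hwδ p.1]⟩)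
      (abs_nonneg _) (by positivity)
  have hv : Integrable (fun p : X × X => (v p.2 - v p.1) ^ 2) (hm.edgeMeasure ν hS) := by
    refine .of_bound (by fun_prop) ((C + C) ^ 2) (ae_of_all _ fun p => ?_)
    rw [Real.norm_of_nonneg (sq_nonneg _)]
    exact sq_le_sq_of_abs_le ((abs_sub _ _).trans (add_le_add (hvC _) (hvC _)))
  calc ∫ x in mClosure m Ω, v x ^ 2 / w x * ∫ y in mClosure m Ω, (w x - w y) ∂m x ∂ν
      = ∫ p, v p.1 ^ 2 / w p.1 * (w p.1 - w p.2) ∂hm.edgeMeasure ν hS := by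
        simp_rw [hm.integral_edgeMeasure hS hG, integral_const_mul]
    _ ≤ 1 / 2 * ∫ p, (v p.2 - v p.1) ^ 2 ∂hm.edgeMeasure ν hS :=
        integral_picone_le (hrev.map_swap_edgeMeasure hm hS) (fun x => hδ.trans_le (hwδ x)) hG hv
    _ = gradEnergy m ν Ω v := by rw [hm.integral_edgeMeasure hS hv, gradEnergy]

theorem setIntegral_mul_sq_le_gradEnergy (hrev : Reversible m ν) (hm : IsRandomWalk m)
    (hΩ : MeasurableSet Ω) [IsFiniteMeasure (ν.restrict (mClosure m Ω))] {v w c : X → ℝ}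
    {δ C : ℝ} (hv : Measurable v) (hvC : ∀ x, |v x| ≤ C) (hv0 : ∀ x ∉ Ω, v x = 0)
    (hw : Measurable w) (hδ : 0 < δ) (hwδ : ∀ x, δ ≤ w x) (hwC : ∀ x, w x ≤ C)
    (hcv : Integrable (fun x => c x * v x ^ 2) (ν.restrict Ω))
    (hsuper : ∀ᵐ x ∂ν.restrict Ω, c x * w x ≤ ∫ y in mClosure m Ω, (w x - w y) ∂m x) :
    ∫ x in Ω, c x * v x ^ 2 ∂ν ≤ gradEnergy m ν Ω v := by
  set S := mClosure m Ω
  have hS : MeasurableSet S := hm.measurableSet_mClosure hΩ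
  have := isFiniteMeasure_restrict_of_mClosure (ν := ν) (m := m) (Ω := Ω)
  have hwpos : ∀ x, 0 < w x := fun x => hδ.trans_le (hwδ x)
  have hI : Integrable (fun x => v x ^ 2 / w x * ∫ y in S, (w x - w y) ∂m x) (ν.restrict Ω) := by
    refine .of_bound ((by fun_prop : Measurable fun x => v x ^ 2 / w x).mul
      (hm.measurable_setIntegral hS (by fun_prop))).aestronglyMeasurable (C ^ 2 / δ * C)
      (ae_of_all _ fun x => ?_)
    rw [Real.norm_eq_abs, abs_mul, abs_div, abs_of_pos (hwpos x), abs_of_nonneg (sq_nonneg _)]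
    refine mul_le_mul (div_le_div₀ (sq_nonneg C) (sq_le_sq_of_abs_le (hvC x)) hδ (hwδ x))
      (hm.abs_setIntegral_le (fun y => abs_sub_le_iff.mpr ?_) x) (abs_nonneg _) (by positivity)
    exact ⟨by linarith [hwC x, hwδ y], by linarith [hwC y, hwδ x]⟩
  calc ∫ x in Ω, c x * v x ^ 2 ∂ν
      ≤ ∫ x in Ω, v x ^ 2 / w x * ∫ y in S, (w x - w y) ∂m x ∂ν := by
        refine integral_mono_ae hcv hI (hsuper.mono fun x hx => ?_)
        calc c x * v x ^ 2 = v x ^ 2 / w x * (c x * w x) := by field_simp [(hwpos x).ne']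
          _ ≤ _ := mul_le_mul_of_nonneg_left hx (div_nonneg (sq_nonneg _) (hwpos x).le)
    _ = ∫ x in S, v x ^ 2 / w x * ∫ y in S, (w x - w y) ∂m x ∂ν :=
        (setIntegral_eq_of_subset_of_forall_sdiff_eq_zero hS subset_union_left
          fun x hx => by simp [hv0 x hx.2]).symm
    _ ≤ gradEnergy m ν Ω v := setIntegral_picone_le_gradEnergy hrev hm hΩ hv hvC hw hδ hwδ hwC

/-! ### Monotone iteration below a supersolution -/

/-- `-Δ_m u = μ G(u)` a.e. on `Ω`, written as a fixed-point equation; the two agree for bounded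
`u` by `deltaM_eq_integral_sub`. -/
def MeanValueEq (m : X → Measure X) (ν : Measure X) (Ω : Set X) (μ : ℝ) (G : ℝ → ℝ)
    (u : X → ℝ) : Prop :=
  ∀ᵐ x ∂ν.restrict Ω, u x = ∫ y, u y ∂m x + μ * G (u x)

lemma eq_integral_add_mul_of_tendsto (hm : IsRandomWalk m) {G : ℝ → ℝ} (hG : Continuous G)
    {s : ℕ → X → ℝ} {u : X → ℝ} {C : ℝ} (hs : ∀ n, Measurable (s n))
    (hsC : ∀ n y, |s n y| ≤ C) (hsu : ∀ y, Tendsto (fun n => s n y) atTop (𝓝 (u y)))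
    {μ : ℕ → ℝ} {μ₀ : ℝ} (hμ : Tendsto μ atTop (𝓝 μ₀)) {x : X} {t : ℕ → ℝ}
    (ht : Tendsto t atTop (𝓝 (u x))) (hts : ∀ n, t n = ∫ y, s n y ∂m x + μ n * G (s n x)) :
    u x = ∫ y, u y ∂m x + μ₀ * G (u x) := by
  have := hm.1 x
  refine tendsto_nhds_unique ht ?_
  rw [funext hts]
  exact (tendsto_integral_of_dominated_convergence (fun _ => C)
    (fun n => (hs n).aestronglyMeasurable) (integrable_const C) (fun n => ae_of_all _ (hsC n))
    (ae_of_all _ hsu)).add (hμ.mul ((hG.tendsto _).comp (hsu x)))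

/-- The cap by `u` keeps the iterates below `u` everywhere, although `u` is a supersolution only
almost everywhere. -/
noncomputable def iterBelow (m : X → Measure X) (Ω : Set X) (G : ℝ → ℝ) (μ : ℝ) (u : X → ℝ) :
    ℕ → X → ℝ
  | 0 => 0
  | n + 1 => Ω.indicator fun x =>
      min (∫ y, iterBelow m Ω G μ u n y ∂m x + μ * G (iterBelow m Ω G μ u n x)) (u x)

noncomputable def solBelow (m : X → Measure X) (Ω : Set X) (G : ℝ → ℝ) (μ : ℝ) (u : X → ℝ)
    (x : X) : ℝ :=
  ⨆ n, iterBelow m Ω G μ u n x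

section iterBelow

variable {G : ℝ → ℝ} {μ μ' l C : ℝ} {u : X → ℝ}

lemma iterBelow_mem_Icc (hGm : Monotone G) (hG0 : 0 ≤ G 0) (hμ : 0 ≤ μ)
    (hu : ∀ x, u x ∈ Icc 0 C) : ∀ n x, iterBelow m Ω G μ u n x ∈ Icc 0 (u x)
  | 0, x => ⟨le_rfl, (hu x).1⟩
  | n + 1, x => by
    by_cases hx : x ∈ Ω
    · have ih := iterBelow_mem_Icc hGm hG0 hμ hu n
      rw [iterBelow, indicator_of_mem hx]
      exact ⟨le_min (add_nonneg (integral_nonneg fun y => (ih y).1)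
        (mul_nonneg hμ (hG0.trans (hGm (ih x).1)))) (hu x).1, min_le_right _ _⟩
    · rw [iterBelow, indicator_of_notMem hx]
      exact ⟨le_rfl, (hu x).1⟩

lemma abs_iterBelow_le (hGm : Monotone G) (hG0 : 0 ≤ G 0) (hμ : 0 ≤ μ)
    (hu : ∀ x, u x ∈ Icc 0 C) (n : ℕ) (x : X) : |iterBelow m Ω G μ u n x| ≤ C :=
  abs_le_of_mem_Icc_zero ⟨(iterBelow_mem_Icc hGm hG0 hμ hu n x).1,
    (iterBelow_mem_Icc hGm hG0 hμ hu n x).2.trans (hu x).2⟩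

lemma measurable_iterBelow (hm : IsRandomWalk m) (hΩ : MeasurableSet Ω) (hG : Measurable G)
    (hu : Measurable u) : ∀ n, Measurable (iterBelow m Ω G μ u n)
  | 0 => measurable_const
  | n + 1 => by
    have ih := measurable_iterBelow hm hΩ hG hu n
    exact (((hm.measurable_integral (H := fun _ y => iterBelow m Ω G μ u n y)
      (ih.comp measurable_snd)).add ((hG.comp ih).const_mul μ)).min hu).indicator hΩ

lemma iterBelow_le_iterBelow_succ (hm : IsRandomWalk m) (hΩ : MeasurableSet Ω)
    (hG : Measurable G) (hGm : Monotone G) (hG0 : 0 ≤ G 0) (hμ : 0 ≤ μ) (hμμ' : μ ≤ μ')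
    (hu : Measurable u) (huC : ∀ x, u x ∈ Icc 0 C) :
    ∀ n x, iterBelow m Ω G μ u n x ≤ iterBelow m Ω G μ' u (n + 1) x
  | 0, x => (iterBelow_mem_Icc hGm hG0 (hμ.trans hμμ') huC 1 x).1
  | n + 1, x => by
    by_cases hx : x ∈ Ω
    · have ih := iterBelow_le_iterBelow_succ hm hΩ hG hGm hG0 hμ hμμ' hu huC n
      rw [iterBelow, iterBelow, indicator_of_mem hx, indicator_of_mem hx]
      refine min_le_min (add_le_add ?_ ?_) le_rfl
      · exact integral_mono
          (hm.integrable_of_abs_le (measurable_iterBelow hm hΩ hG hu n)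
            (abs_iterBelow_le hGm hG0 hμ huC n) x)
          (hm.integrable_of_abs_le (measurable_iterBelow hm hΩ hG hu (n + 1))
            (abs_iterBelow_le hGm hG0 (hμ.trans hμμ') huC (n + 1)) x) ih
      · exact mul_le_mul hμμ' (hGm (ih x))
          (hG0.trans (hGm (iterBelow_mem_Icc hGm hG0 hμ huC n x).1)) (hμ.trans hμμ')
    · simp [iterBelow, hx]

lemma tendsto_iterBelow (hm : IsRandomWalk m) (hΩ : MeasurableSet Ω) (hG : Measurable G)
    (hGm : Monotone G) (hG0 : 0 ≤ G 0) (hμ : 0 ≤ μ) (hu : Measurable u)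
    (huC : ∀ x, u x ∈ Icc 0 C) (x : X) :
    Tendsto (fun n => iterBelow m Ω G μ u n x) atTop (𝓝 (solBelow m Ω G μ u x)) :=
  tendsto_atTop_ciSup (monotone_nat_of_le_succ fun n =>
      iterBelow_le_iterBelow_succ hm hΩ hG hGm hG0 hμ le_rfl hu huC n x)
    ⟨u x, by rintro _ ⟨n, rfl⟩; exact (iterBelow_mem_Icc hGm hG0 hμ huC n x).2⟩

lemma solBelow_mem_Icc (hm : IsRandomWalk m) (hΩ : MeasurableSet Ω) (hG : Measurable G)
    (hGm : Monotone G) (hG0 : 0 ≤ G 0) (hμ : 0 ≤ μ) (hu : Measurable u)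
    (huC : ∀ x, u x ∈ Icc 0 C) (x : X) : solBelow m Ω G μ u x ∈ Icc 0 (u x) :=
  isClosed_Icc.mem_of_tendsto (tendsto_iterBelow hm hΩ hG hGm hG0 hμ hu huC x)
    (Eventually.of_forall fun n => iterBelow_mem_Icc hGm hG0 hμ huC n x)

lemma measurable_solBelow (hm : IsRandomWalk m) (hΩ : MeasurableSet Ω) (hG : Measurable G)
    (hGm : Monotone G) (hG0 : 0 ≤ G 0) (hμ : 0 ≤ μ) (hu : Measurable u)
    (huC : ∀ x, u x ∈ Icc 0 C) : Measurable (solBelow m Ω G μ u) :=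
  measurable_of_tendsto_metrizable (measurable_iterBelow hm hΩ hG hu)
    (tendsto_pi_nhds.mpr (tendsto_iterBelow hm hΩ hG hGm hG0 hμ hu huC))

lemma solBelow_mono (hm : IsRandomWalk m) (hΩ : MeasurableSet Ω) (hG : Measurable G)
    (hGm : Monotone G) (hG0 : 0 ≤ G 0) (hμ : 0 ≤ μ) (hμμ' : μ ≤ μ') (hu : Measurable u)
    (huC : ∀ x, u x ∈ Icc 0 C) (x : X) : solBelow m Ω G μ u x ≤ solBelow m Ω G μ' u x :=
  le_of_tendsto_of_tendsto' (tendsto_iterBelow hm hΩ hG hGm hG0 hμ hu huC x)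
    ((tendsto_iterBelow hm hΩ hG hGm hG0 (hμ.trans hμμ') hu huC x).comp
      (tendsto_add_atTop_nat 1))
    (iterBelow_le_iterBelow_succ hm hΩ hG hGm hG0 hμ hμμ' hu huC · x)

lemma meanValueEq_solBelow (hm : IsRandomWalk m) (hΩ : MeasurableSet Ω) (hG : Continuous G)
    (hGm : Monotone G) (hG0 : 0 ≤ G 0) (hμ : 0 ≤ μ) (hμl : μ ≤ l) (hu : Measurable u)
    (huC : ∀ x, u x ∈ Icc 0 C) (hueq : MeanValueEq m ν Ω l G u) :
    MeanValueEq m ν Ω μ G (solBelow m Ω G μ u) := by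
  have hit := measurable_iterBelow (m := m) (μ := μ) hm hΩ hG.measurable hu
  have hitC := abs_iterBelow_le (m := m) (Ω := Ω) hGm hG0 hμ huC
  have hlim := tendsto_iterBelow hm hΩ hG.measurable hGm hG0 hμ hu huC
  filter_upwards [hueq, ae_restrict_mem hΩ] with x hx hxΩ
  refine eq_integral_add_mul_of_tendsto hm hG hit hitC hlim tendsto_const_nhds
    ((hlim x).comp (tendsto_add_atTop_nat 1)) fun n => ?_
  -- the cap is inactive because `u` is a supersolution at the smaller parameter `μ`
  have hsuper : ∫ y, u y ∂m x + μ * G (u x) ≤ u x := by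
    have := mul_le_mul_of_nonneg_right hμl (hG0.trans (hGm (huC x).1))
    linarith
  change iterBelow m Ω G μ u (n + 1) x = _
  rw [iterBelow, indicator_of_mem hxΩ]
  refine min_eq_left (le_trans (add_le_add ?_ ?_) hsuper)
  exacts [integral_mono (hm.integrable_of_abs_le (hit n) (hitC n) x)
      (hm.integrable_of_abs_le hu (fun y => abs_le_of_mem_Icc_zero (huC y)) x)
      fun y => (iterBelow_mem_Icc hGm hG0 hμ huC n y).2,
    mul_le_mul_of_nonneg_left (hGm (iterBelow_mem_Icc hGm hG0 hμ huC n x).2) hμ]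

end iterBelow

lemma ae_tendsto_solBelow (hm : IsRandomWalk m) (hΩ : MeasurableSet Ω) {G : ℝ → ℝ}
    (hG : Continuous G) (hGm : Monotone G) (hG0 : 0 ≤ G 0) {l : ℝ} {μ : ℕ → ℝ}
    (hμ0 : ∀ k, 0 ≤ μ k) (hμl : ∀ k, μ k ≤ l) (hμmono : Monotone μ)
    (hμlim : Tendsto μ atTop (𝓝 l)) {u : X → ℝ} {C : ℝ} (hu : Measurable u)
    (huC : ∀ x, u x ∈ Icc 0 C) (hu0 : ∀ x ∉ Ω, u x = 0) (hueq : MeanValueEq m ν Ω l G u)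
    (hmin : ∀ W : X → ℝ, Measurable W → (∀ x, W x ∈ Icc 0 C) → (∀ x ∉ Ω, W x = 0) →
      MeanValueEq m ν Ω l G W → ∀ᵐ x ∂ν.restrict Ω, u x ≤ W x) :
    ∀ᵐ x ∂ν.restrict Ω, Tendsto (fun k => solBelow m Ω G (μ k) u x) atTop (𝓝 (u x)) := by
  set V : ℕ → X → ℝ := fun k => solBelow m Ω G (μ k) u
  have hV k := measurable_solBelow hm hΩ hG.measurable hGm hG0 (hμ0 k) hu huC
  have hVu k x := solBelow_mem_Icc hm hΩ hG.measurable hGm hG0 (hμ0 k) hu huC x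
  have hVeq k := meanValueEq_solBelow hm hΩ hG hGm hG0 (hμ0 k) (hμl k) hu huC hueq
  set W : X → ℝ := fun x => ⨆ k, V k x
  have hVW : ∀ x, Tendsto (fun k => V k x) atTop (𝓝 (W x)) := fun x =>
    tendsto_atTop_ciSup
      (fun j k hjk => solBelow_mono hm hΩ hG.measurable hGm hG0 (hμ0 j) (hμmono hjk) hu huC x)
      ⟨u x, by rintro _ ⟨k, rfl⟩; exact (hVu k x).2⟩
  have hWu : ∀ x, W x ∈ Icc 0 (u x) := fun x =>
    isClosed_Icc.mem_of_tendsto (hVW x) (Eventually.of_forall fun k => hVu k x)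
  have hW : Measurable W := measurable_of_tendsto_metrizable hV (tendsto_pi_nhds.mpr hVW)
  have hWeq : MeanValueEq m ν Ω l G W := by
    filter_upwards [ae_all_iff.mpr hVeq] with x hx
    exact eq_integral_add_mul_of_tendsto hm hG hV
      (fun k y => abs_le_of_mem_Icc_zero ⟨(hVu k y).1, (hVu k y).2.trans (huC y).2⟩) hVW hμlim
      (hVW x) hx
  filter_upwards [hmin W hW (fun x => ⟨(hWu x).1, (hWu x).2.trans (huC x).2⟩)
    (fun x hx => le_antisymm ((hWu x).2.trans_eq (hu0 x hx)) (hWu x).1) hWeq] with x hx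
  simpa only [le_antisymm (hWu x).2 hx] using hVW x

/-! ### The gap between two solutions -/

namespace MeanValueEq

variable {G : ℝ → ℝ} {l μ C : ℝ} {u V : X → ℝ}

lemma ae_le_sub_sub_integral (hueq : MeanValueEq m ν Ω l G u) (hVeq : MeanValueEq m ν Ω μ G V)
    (hm : IsRandomWalk m) (hGm : Monotone G) (hμl : μ ≤ l) (hu : Measurable u)
    (hV : Measurable V) (hV0 : ∀ x, 0 ≤ V x) (hVu : ∀ x, V x ≤ u x) (huC : ∀ x, u x ≤ C) :
    ∀ᵐ x ∂ν.restrict Ω,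
      (l - μ) * G 0 + μ * (G (u x) - G (V x)) ≤ u x - V x - ∫ y, (u y - V y) ∂m x := by
  filter_upwards [hueq, hVeq] with x hux hVx
  have hu0 : ∀ y, 0 ≤ u y := fun y => (hV0 y).trans (hVu y)
  rw [integral_sub
    (hm.integrable_of_abs_le hu (fun y => abs_le_of_mem_Icc_zero ⟨hu0 y, huC y⟩) x)
    (hm.integrable_of_abs_le hV (fun y => abs_le_of_mem_Icc_zero ⟨hV0 y, (hVu y).trans (huC y)⟩)
      x)]
  have : (l - μ) * G 0 ≤ (l - μ) * G (u x) :=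
    mul_le_mul_of_nonneg_left (hGm (hu0 x)) (sub_nonneg.mpr hμl)
  linarith

lemma ae_mul_le_sub (hueq : MeanValueEq m ν Ω l G u) (hVeq : MeanValueEq m ν Ω μ G V)
    (hm : IsRandomWalk m) (hGm : Monotone G) (hμ : 0 ≤ μ) (hμl : μ ≤ l) (hu : Measurable u)
    (hV : Measurable V) (hV0 : ∀ x, 0 ≤ V x) (hVu : ∀ x, V x ≤ u x) (huC : ∀ x, u x ≤ C) :
    ∀ᵐ x ∂ν.restrict Ω, (l - μ) * G 0 ≤ u x - V x := by
  filter_upwards [hueq.ae_le_sub_sub_integral hVeq hm hGm hμl hu hV hV0 hVu huC] with x hx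
  have := hm.1 x
  have hGuV : 0 ≤ μ * (G (u x) - G (V x)) := mul_nonneg hμ (sub_nonneg.mpr (hGm (hVu x)))
  have hIuV : 0 ≤ ∫ y, (u y - V y) ∂m x := integral_nonneg fun y => sub_nonneg.mpr (hVu y)
  linarith

/-- The gap `u - V ≥ d` on `Ω` is a positive supersolution of the equation linearized between
`V` and `u`; taking the maximum with `d` keeps it positive on `∂_mΩ` as well. -/
lemma ae_mul_slope_mul_le_setIntegral_sub (hueq : MeanValueEq m ν Ω l G u)
    (hVeq : MeanValueEq m ν Ω μ G V) (hrev : Reversible m ν) (hm : IsRandomWalk m)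
    (hΩ : MeasurableSet Ω) [IsFiniteMeasure (ν.restrict Ω)] (hGm : Monotone G) (hμ : 0 ≤ μ)
    (hμl : μ ≤ l) {d : ℝ} (hd0 : 0 ≤ d) (hd : d ≤ (l - μ) * G 0) (hu : Measurable u)
    (hV : Measurable V) (hV0 : ∀ x, 0 ≤ V x) (hVu : ∀ x, V x ≤ u x) (huC : ∀ x, u x ≤ C)
    (hu0 : ∀ x ∉ Ω, u x = 0) :
    ∀ᵐ x ∂ν.restrict Ω, μ * slope G (u x) (V x) * max (u x - V x) d
      ≤ ∫ y in mClosure m Ω, (max (u x - V x) d - max (u y - V y) d) ∂m x := by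
  set S := mClosure m Ω
  set w : X → ℝ := fun x => max (u x - V x) d
  have huV : ∀ y, u y - V y ∈ Icc 0 C := fun y =>
    ⟨sub_nonneg.mpr (hVu y), by linarith [hV0 y, huC y]⟩
  filter_upwards [hueq.ae_le_sub_sub_integral hVeq hm hGm hμl hu hV hV0 hVu huC,
    hueq.ae_mul_le_sub hVeq hm hGm hμ hμl hu hV hV0 hVu huC,
    hrev.ae_measure_mClosure_eq_one hm hΩ] with x hgap hdx hmass
  have := hm.1 x
  have hmassS : (m x).real S = 1 := by rw [measureReal_def, hmass, ENNReal.toReal_one]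
  have hwx : w x = u x - V x := max_eq_left (hd.trans hdx)
  have hw : Measurable w := (hu.sub hV).max measurable_const
  have hintw : Integrable w ((m x).restrict S) :=
    (hm.integrable_of_abs_le hw (C := C + d)
      (fun y => abs_le_of_mem_Icc_zero ⟨hd0.trans (le_max_right _ _),
        max_le (by linarith [(huV y).2]) (by linarith [(huV y).1, (huV y).2])⟩) x).restrict
  have hintuV : Integrable (fun y => u y - V y) (m x) :=
    hm.integrable_of_abs_le (hu.sub hV) (fun y => abs_le_of_mem_Icc_zero (huV y)) x
  have hIw : ∫ y in S, w y ∂m x ≤ ∫ y, (u y - V y) ∂m x + d :=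
    calc ∫ y in S, w y ∂m x ≤ ∫ y in S, (u y - V y + d) ∂m x :=
          setIntegral_mono hintw (hintuV.add (integrable_const d)).integrableOn
            fun y => max_le (by linarith) (by linarith [(huV y).1])
      _ = ∫ y, (u y - V y) ∂m x + d := by
          rw [integral_add hintuV.integrableOn (integrable_const d), setIntegral_const, hmassS,
            one_smul, setIntegral_eq_integral_of_forall_compl_eq_zero fun y hy => ?_]
          have hyΩ : y ∉ Ω := fun h => hy (subset_union_left h)
          linarith [hu0 y hyΩ, hV0 y, hVu y]
  calc μ * slope G (u x) (V x) * w x = μ * (G (u x) - G (V x)) := by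
        have h := sub_smul_slope G (u x) (V x)
        simp only [smul_eq_mul, vsub_eq_sub] at h
        rw [hwx]
        linear_combination (-μ) * h
    _ ≤ w x - ∫ y in S, w y ∂m x := by linarith
    _ = ∫ y in S, (w x - w y) ∂m x := by
        rw [integral_sub (integrable_const _) hintw, setIntegral_const, hmassS, one_smul]

theorem setIntegral_mul_slope_mul_sq_le_gradEnergy (hueq : MeanValueEq m ν Ω l G u)
    (hVeq : MeanValueEq m ν Ω μ G V) (hrev : Reversible m ν) (hm : IsRandomWalk m)
    (hΩ : MeasurableSet Ω) [IsFiniteMeasure (ν.restrict (mClosure m Ω))] (hGm : Monotone G)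
    (hG0 : 0 < G 0) (hμ : 0 ≤ μ) (hμl : μ < l) (hu : Measurable u) (hV : Measurable V)
    (hV0 : ∀ x, 0 ≤ V x) (hVu : ∀ x, V x ≤ u x) (huC : ∀ x, u x ≤ C) (hu0 : ∀ x ∉ Ω, u x = 0)
    {v : X → ℝ} (hv : Measurable v) (hvC : ∀ x, |v x| ≤ C) (hv0 : ∀ x ∉ Ω, v x = 0)
    (hint : Integrable (fun x => μ * slope G (u x) (V x) * v x ^ 2) (ν.restrict Ω)) :
    ∫ x in Ω, μ * slope G (u x) (V x) * v x ^ 2 ∂ν ≤ gradEnergy m ν Ω v := by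
  have := isFiniteMeasure_restrict_of_mClosure (ν := ν) (m := m) (Ω := Ω)
  have hd : 0 < (l - μ) * G 0 := mul_pos (sub_pos.mpr hμl) hG0
  exact setIntegral_mul_sq_le_gradEnergy (C := C + (l - μ) * G 0) hrev hm hΩ hv
    (fun x => (hvC x).trans (by linarith))
    hv0 (by fun_prop : Measurable fun x => max (u x - V x) ((l - μ) * G 0)) hd
    (fun x => le_max_right _ _)
    (fun x => max_le (by linarith [hV0 x, huC x]) (by linarith [hV0 x, hVu x, huC x])) hint
    (hueq.ae_mul_slope_mul_le_setIntegral_sub hVeq hrev hm hΩ hGm hμ hμl.le hd.le le_rfl hu hV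
      hV0 hVu huC hu0)

end MeanValueEq

/-! ### Passage to the limit in the difference quotients -/

lemma LipschitzOnWith.abs_slope_le {G : ℝ → ℝ} {K : NNReal} {s : Set ℝ}
    (hG : LipschitzOnWith K G s) {a b : ℝ} (ha : a ∈ s) (hb : b ∈ s) : |slope G a b| ≤ K := by
  rcases eq_or_ne b a with rfl | hne
  · simp
  rw [slope_def_field, abs_div, div_le_iff₀ (abs_pos.mpr (sub_ne_zero.mpr hne))]
  simpa [Real.dist_eq] using hG.dist_le_mul b hb a ha

lemma LipschitzOnWith.abs_mul_slope_mul_sq_le {G : ℝ → ℝ} {K : NNReal} {s : Set ℝ}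
    (hG : LipschitzOnWith K G s) {a b : ℝ} (ha : a ∈ s) (hb : b ∈ s) {μ l c C : ℝ}
    (hμ : |μ| ≤ l) (hc : |c| ≤ C) : |μ * slope G a b * c ^ 2| ≤ l * K * C ^ 2 := by
  rw [abs_mul, abs_mul, abs_of_nonneg (sq_nonneg c)]
  exact mul_le_mul (mul_le_mul hμ (hG.abs_slope_le ha hb) (abs_nonneg _)
    ((abs_nonneg _).trans hμ)) (sq_le_sq_of_abs_le hc) (sq_nonneg _)
    (mul_nonneg ((abs_nonneg _).trans hμ) K.2)

lemma integrable_mul_slope_mul_sq {ρ : Measure X} [IsFiniteMeasure ρ] {G : ℝ → ℝ}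
    (hG : Measurable G) {s : Set ℝ} {K : NNReal} (hGK : LipschitzOnWith K G s) {μ l C : ℝ}
    (hμl : |μ| ≤ l) {u V v : X → ℝ} (hu : Measurable u) (hV : Measurable V) (hv : Measurable v)
    (hus : ∀ x, u x ∈ s) (hVs : ∀ x, V x ∈ s) (hvC : ∀ x, |v x| ≤ C) :
    Integrable (fun x => μ * slope G (u x) (V x) * v x ^ 2) ρ :=
  .of_bound (by simp only [slope_def_field]; fun_prop) (l * K * C ^ 2)
    (ae_of_all _ fun x => hGK.abs_mul_slope_mul_sq_le (hus x) (hVs x) hμl (hvC x))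

lemma tendsto_setIntegral_mul_slope_mul_sq [IsFiniteMeasure (ν.restrict Ω)] {G G' : ℝ → ℝ}
    (hG : Measurable G) {s : Set ℝ} {K : NNReal} (hGK : LipschitzOnWith K G s) {μ : ℕ → ℝ}
    {l : ℝ} (hμ : Tendsto μ atTop (𝓝 l)) (hμl : ∀ k, |μ k| ≤ l) {u v : X → ℝ}
    {V : ℕ → X → ℝ} {C : ℝ} (hu : Measurable u) (hV : ∀ k, Measurable (V k))
    (hv : Measurable v) (hus : ∀ x, u x ∈ s) (hVs : ∀ k x, V k x ∈ s) (hvC : ∀ x, |v x| ≤ C)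
    (hderiv : ∀ x, HasDerivWithinAt G (G' (u x)) s (u x))
    (hVu : ∀ᵐ x ∂ν.restrict Ω, Tendsto (fun k => V k x) atTop (𝓝[s \ {u x}] (u x))) :
    Tendsto (fun k => ∫ x in Ω, μ k * slope G (u x) (V k x) * v x ^ 2 ∂ν) atTop
      (𝓝 (∫ x in Ω, l * G' (u x) * v x ^ 2 ∂ν)) :=
  tendsto_integral_of_dominated_convergence (fun _ => l * K * C ^ 2)
    (fun k => (integrable_mul_slope_mul_sq hG hGK (hμl k) hu (hV k) hv hus (hVs k)
      hvC).aestronglyMeasurable) (integrable_const _)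
    (fun k => ae_of_all _ fun x => hGK.abs_mul_slope_mul_sq_le (hus x) (hVs k x) (hμl k) (hvC x))
    (hVu.mono fun x hx =>
      (hμ.mul ((hasDerivWithinAt_iff_tendsto_slope.mp (hderiv x)).comp hx)).mul_const _)

theorem setIntegral_mul_deriv_mul_sq_le_gradEnergy (hrev : Reversible m ν) (hm : IsRandomWalk m)
    (hΩ : MeasurableSet Ω) [IsFiniteMeasure (ν.restrict (mClosure m Ω))] {G G' : ℝ → ℝ}
    (hG : Continuous G) (hGm : Monotone G) (hG0 : 0 < G 0) {C : ℝ} {K : NNReal}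
    (hGK : LipschitzOnWith K G (Icc 0 C)) {l : ℝ} (hl : 0 < l) {u v : X → ℝ}
    (hu : Measurable u) (huC : ∀ x, u x ∈ Icc 0 C) (hu0 : ∀ x ∉ Ω, u x = 0)
    (hueq : MeanValueEq m ν Ω l G u)
    (hmin : ∀ W : X → ℝ, Measurable W → (∀ x, W x ∈ Icc 0 C) → (∀ x ∉ Ω, W x = 0) →
      MeanValueEq m ν Ω l G W → ∀ᵐ x ∂ν.restrict Ω, u x ≤ W x)
    (hderiv : ∀ x, HasDerivWithinAt G (G' (u x)) (Icc 0 C) (u x)) (hv : Measurable v)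
    (hvC : ∀ x, |v x| ≤ C) (hv0 : ∀ x ∉ Ω, v x = 0) :
    ∫ x in Ω, l * G' (u x) * v x ^ 2 ∂ν ≤ gradEnergy m ν Ω v := by
  have := isFiniteMeasure_restrict_of_mClosure (ν := ν) (m := m) (Ω := Ω)
  obtain ⟨μ, hμmono, hμmem, hμlim⟩ := exists_seq_strictMono_tendsto' hl
  have hμ0 k : 0 ≤ μ k := (hμmem k).1.le
  set V : ℕ → X → ℝ := fun k => solBelow m Ω G (μ k) u
  have hV k := measurable_solBelow hm hΩ hG.measurable hGm hG0.le (hμ0 k) hu huC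
  have hVu k x := solBelow_mem_Icc hm hΩ hG.measurable hGm hG0.le (hμ0 k) hu huC x
  have hVC k x : V k x ∈ Icc 0 C := ⟨(hVu k x).1, (hVu k x).2.trans (huC x).2⟩
  have hVeq k := meanValueEq_solBelow hm hΩ hG hGm hG0.le (hμ0 k) (hμmem k).2.le hu huC hueq
  have hgap k : ∀ᵐ x ∂ν.restrict Ω, V k x < u x := by
    filter_upwards [hueq.ae_mul_le_sub (hVeq k) hm hGm (hμ0 k) (hμmem k).2.le hu (hV k)
      (fun x => (hVu k x).1) (fun x => (hVu k x).2) (fun x => (huC x).2)] with x hx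
    linarith [mul_pos (sub_pos.mpr (hμmem k).2) hG0]
  have hVlim : ∀ᵐ x ∂ν.restrict Ω, Tendsto (fun k => V k x) atTop (𝓝[Icc 0 C \ {u x}] (u x)) := by
    filter_upwards [ae_tendsto_solBelow hm hΩ hG hGm hG0.le hμ0 (fun k => (hμmem k).2.le)
      hμmono.monotone hμlim hu huC hu0 hueq hmin, ae_all_iff.mpr hgap] with x hx hxk
    exact tendsto_nhdsWithin_iff.mpr
      ⟨hx, Eventually.of_forall fun k => ⟨hVC k x, (hxk k).ne⟩⟩
  have hμl k : |μ k| ≤ l := (abs_of_nonneg (hμ0 k)).trans_le (hμmem k).2.le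
  refine le_of_tendsto' (tendsto_setIntegral_mul_slope_mul_sq hG.measurable hGK hμlim hμl hu hV
    hv huC hVC hvC hderiv hVlim) fun k => ?_
  exact hueq.setIntegral_mul_slope_mul_sq_le_gradEnergy (hVeq k) hrev hm hΩ hGm hG0 (hμ0 k)
    (hμmem k).2 hu (hV k) (fun x => (hVu k x).1) (fun x => (hVu k x).2) (fun x => (huC x).2)
    hu0 hv hvC hv0
    (integrable_mul_slope_mul_sq hG.measurable hGK (hμl k) hu (hV k) hv huC (hVC k) hvC)

/-! ### Bounded representatives and the stability inequality -/

lemma MemL20.exists_modification_mem_Icc (hΩ : MeasurableSet Ω) {u : X → ℝ}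
    (hu : MemL20 m ν Ω u) {a b : ℝ} (ha : a ≤ 0) (hb : 0 ≤ b)
    (hab : ∀ᵐ x ∂ν.restrict (mClosure m Ω), u x ∈ Icc a b) :
    ∃ u' : X → ℝ, Measurable u' ∧ (∀ x, u' x ∈ Icc a b) ∧ (∀ x ∉ Ω, u' x = 0) ∧
      u' =ᵐ[ν.restrict (mClosure m Ω)] u := by
  refine ⟨Ω.indicator fun x => max a (min (u x) b),
    ((measurable_const.max (hu.1.min measurable_const)).indicator hΩ), fun x => ?_,
    fun x hx => indicator_of_notMem hx _, ?_⟩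
  · by_cases hx : x ∈ Ω
    · rw [indicator_of_mem hx]
      exact ⟨le_max_left _ _, max_le (ha.trans hb) (min_le_right _ _)⟩
    · rw [indicator_of_notMem hx]
      exact ⟨ha, hb⟩
  rw [mClosure, EventuallyEq, ae_restrict_union_iff]
  refine ⟨?_, ?_⟩
  · filter_upwards [ae_restrict_of_ae_restrict_of_subset subset_union_left hab,
      ae_restrict_mem hΩ] with x hx hxΩ
    rw [indicator_of_mem hxΩ, min_eq_left hx.2, max_eq_right hx.1]
  · filter_upwards [hu.2.2.1] with x hx
    by_cases hxΩ : x ∈ Ω <;> simp [hxΩ, hx, ha, hb]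

lemma meanValueEq_of_isSol (hrev : Reversible m ν) (hm : IsRandomWalk m) (hΩ : MeasurableSet Ω)
    [IsFiniteMeasure (ν.restrict (mClosure m Ω))] {f G : ℝ → ℝ} (hGf : ∀ s, 0 ≤ s → G s = f s)
    {l : ℝ} {u u' : X → ℝ} {C : ℝ} (hu : IsSol m ν Ω l f u) (hu' : Measurable u')
    (hu'C : ∀ x, u' x ∈ Icc 0 C) (hu'0 : ∀ x ∉ Ω, u' x = 0)
    (hu'u : u' =ᵐ[ν.restrict (mClosure m Ω)] u) : MeanValueEq m ν Ω l G u' := by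
  have hΔ := deltaM_congr_ae hrev hm (hm.measurableSet_mClosure hΩ) hu' hu.1.1 hu'u
    fun x hx => by rw [hu.1.2.2.2 x hx, hu'0 x fun h => hx (subset_union_left h)]
  filter_upwards [ae_restrict_of_ae_restrict_of_subset subset_union_left hΔ, hu.2.2,
    ae_restrict_of_ae_restrict_of_subset subset_union_left hu'u] with x hΔx hux hu'ux
  rw [← hΔx, deltaM_eq_integral_sub hm hu' (fun y => abs_le_of_mem_Icc_zero (hu'C y)) x,
    ← hu'ux, ← hGf _ (hu'C x).1] at hux
  linarith

lemma isSol_of_meanValueEq (hm : IsRandomWalk m) (hΩ : MeasurableSet Ω)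
    [IsFiniteMeasure (ν.restrict (mClosure m Ω))] {f G : ℝ → ℝ} (hGf : ∀ s, 0 ≤ s → G s = f s)
    {l : ℝ} {W : X → ℝ} {C : ℝ} (hW : Measurable W) (hWC : ∀ x, W x ∈ Icc 0 C)
    (hW0 : ∀ x ∉ Ω, W x = 0) (hWeq : MeanValueEq m ν Ω l G W) : IsSol m ν Ω l f W := by
  have hWC' x : |W x| ≤ C := abs_le_of_mem_Icc_zero (hWC x)
  refine ⟨⟨hW, .of_bound hW.aestronglyMeasurable C (ae_of_all _ hWC'),
      ae_restrict_of_forall_mem (hm.measurableSet_mBoundary hΩ) fun x hx => hW0 x hx.1,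
      fun x hx => hW0 x fun h => hx (subset_union_left h)⟩,
    ae_of_all _ fun x => (hWC x).1, ?_⟩
  filter_upwards [hWeq] with x hx
  rw [deltaM_eq_integral_sub hm hW hWC' x, ← hGf _ (hWC x).1]
  linarith

theorem mul_setIntegral_derivWithin_mul_sq_le_gradEnergy (hrev : Reversible m ν)
    (hm : IsRandomWalk m) (hΩ : MeasurableSet Ω) [IsFiniteMeasure (ν.restrict (mClosure m Ω))]
    {f : ℝ → ℝ} (hf : ContDiffOn ℝ 1 f (Ici 0)) (hfm : MonotoneOn f (Ici 0)) (hf0 : 0 < f 0)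
    {l : ℝ} (hl : 0 < l) {u u' v : X → ℝ} {C : ℝ} (hmin : IsMinimalSol m ν Ω l f u)
    (hu' : Measurable u') (hu'C : ∀ x, u' x ∈ Icc 0 C) (hu'0 : ∀ x ∉ Ω, u' x = 0)
    (hu'u : u' =ᵐ[ν.restrict (mClosure m Ω)] u) (hv : Measurable v) (hvC : ∀ x, |v x| ≤ C)
    (hv0 : ∀ x ∉ Ω, v x = 0) :
    l * ∫ x in Ω, derivWithin f (Ici 0) (u' x) * v x ^ 2 ∂ν ≤ gradEnergy m ν Ω v := by
  set G : ℝ → ℝ := fun s => f (max s 0)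
  have hGf : ∀ s, 0 ≤ s → G s = f s := fun s hs => by simp only [G, max_eq_left hs]
  have hG : Continuous G :=
    hf.continuousOn.comp_continuous (continuous_id.max continuous_const) fun s => le_max_right s 0
  have hGm : Monotone G := fun a b hab =>
    hfm (le_max_right a 0) (le_max_right b 0) (max_le_max hab le_rfl)
  obtain ⟨K, hK⟩ := (hf.mono Icc_subset_Ici_self).exists_lipschitzOnWith one_ne_zero
    (convex_Icc 0 C) isCompact_Icc
  have hGK : LipschitzOnWith K G (Icc 0 C) := fun a ha b hb => by
    simpa only [hGf a ha.1, hGf b hb.1] using hK ha hb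
  have hderiv x : HasDerivWithinAt G (derivWithin f (Ici 0) (u' x)) (Icc 0 C) (u' x) :=
    ((hf.differentiableOn one_ne_zero _ (hu'C x).1).hasDerivWithinAt.congr hGf
      (hGf _ (hu'C x).1)).mono Icc_subset_Ici_self
  have hmin' (W : X → ℝ) (hW : Measurable W) (hWC : ∀ x, W x ∈ Icc 0 C)
      (hW0 : ∀ x ∉ Ω, W x = 0) (hWeq : MeanValueEq m ν Ω l G W) :
      ∀ᵐ x ∂ν.restrict Ω, u' x ≤ W x := by
    filter_upwards [ae_restrict_of_ae_restrict_of_subset subset_union_left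
        (hmin.2 W (isSol_of_meanValueEq hm hΩ hGf hW hWC hW0 hWeq)),
      ae_restrict_of_ae_restrict_of_subset subset_union_left hu'u] with x huW hu'ux
    exact hu'ux ▸ huW
  rw [← integral_const_mul]
  simp_rw [← mul_assoc]
  exact setIntegral_mul_deriv_mul_sq_le_gradEnergy hrev hm hΩ hG hGm
    (hf0.trans_eq (hGf 0 le_rfl).symm) hGK hl hu' hu'C hu'0 (meanValueEq_of_isSol hrev hm hΩ hGf hmin.1 hu' hu'C hu'0 hu'u) hmin'
    hderiv hv hvC hv0

theorem IsMinimalSol.isStable (hrev : Reversible m ν) (hm : IsRandomWalk m)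
    (hΩ : MeasurableSet Ω) (hfin : ν (mClosure m Ω) ≠ ⊤) {f : ℝ → ℝ}
    (hf : ContDiffOn ℝ 1 f (Ici 0)) (hfm : MonotoneOn f (Ici 0)) (hf0 : 0 < f 0) {l : ℝ}
    (hl : 0 ≤ l) {u : X → ℝ} (hmin : IsMinimalSol m ν Ω l f u)
    (hb : IsBdd ν (mClosure m Ω) u) : IsStable m ν Ω l (derivWithin f (Ici 0)) u := by
  intro v hv hvb
  rcases hl.eq_or_lt with rfl | hl
  · simpa [Qform] using gradEnergy_nonneg
  have := isFiniteMeasure_restrict.mpr hfin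
  obtain ⟨C₁, hC₁⟩ := hb
  obtain ⟨C₂, hC₂⟩ := hvb
  set C := max (max C₁ C₂) 0
  have hC₁C : C₁ ≤ C := (le_max_left _ _).trans (le_max_left _ _)
  have hC₂C : C₂ ≤ C := (le_max_right _ _).trans (le_max_left _ _)
  have hC : 0 ≤ C := le_max_right _ _
  obtain ⟨u', hu', hu'C, hu'0, hu'u⟩ := hmin.1.1.exists_modification_mem_Icc hΩ le_rfl hC (by
    filter_upwards [hC₁, hmin.1.2.1] with x hx hx0
    exact ⟨hx0, (le_abs_self _).trans (hx.trans hC₁C)⟩)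
  obtain ⟨v', hv', hv'C, hv'0, hv'v⟩ := hv.exists_modification_mem_Icc hΩ (neg_nonpos.mpr hC) hC
    (by filter_upwards [hC₂] with x hx; exact abs_le.mp (hx.trans hC₂C))
  have hQ : Qform m ν Ω l (derivWithin f (Ici 0)) u v
      = Qform m ν Ω l (derivWithin f (Ici 0)) u' v' := by
    rw [Qform, Qform, gradEnergy_congr_ae hrev hm hΩ hv.1 hv' hv'v.symm]
    congr 2
    refine integral_congr_ae ?_
    filter_upwards [ae_restrict_of_ae_restrict_of_subset subset_union_left hu'u,
      ae_restrict_of_ae_restrict_of_subset subset_union_left hv'v] with x hu'x hv'x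
    rw [hu'x, hv'x]
  rw [hQ, Qform, sub_nonneg]
  exact mul_setIntegral_derivWithin_mul_sq_le_gradEnergy hrev hm hΩ hf hfm hf0 hl hmin hu' hu'C
    hu'0 hu'u hv' (fun x => abs_le.mpr (hv'C x)) hv'0

end

theorem minimal_solutions_stable_general
    {X : Type*} [MeasurableSpace X]
    (m : X → MeasureTheory.Measure X) (ν : MeasureTheory.Measure X)
    (Ω : Set X) (lam : ℝ) (φ : X → ℝ) (α M : ℝ)
    (hst : Standing m ν Ω lam φ α M)
    (f : ℝ → ℝ) (c₁ : ℝ) (hH : HypH f c₁)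
    (hC1 : ContDiffOn ℝ 1 f (Set.Ici 0)) :
    (∀ l : ℝ, 0 ≤ l → l < lamStar m ν Ω f →
      ∀ u : X → ℝ, IsMinimalSol m ν Ω l f u → IsBdd ν (mClosure m Ω) u →
        IsStable m ν Ω l (derivWithin f (Set.Ici 0)) u) ∧
    (∀ u : X → ℝ, IsMinimalSol m ν Ω (lamStar m ν Ω f) f u → IsBdd ν (mClosure m Ω) u →
      IsStable m ν Ω (lamStar m ν Ω f) (derivWithin f (Set.Ici 0)) u) := by
  have hstable (l : ℝ) (hl : 0 ≤ l) (u : X → ℝ) (hmin : IsMinimalSol m ν Ω l f u) :=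
    hmin.isStable hst.hrev hst.hrw hst.hmeasΩ hst.hfin.ne hC1 hH.2.1 hH.2.2.1 hl
  exact ⟨fun l hl _ => hstable l hl, hstable _ (Real.sSup_nonneg fun _ h => h.1)⟩

/-- **Stability of minimal solutions**: for `f ∈ C¹([0,∞))` satisfying hypotheses (H), every
minimal bounded solution `u_λ` of `(P(λ f))` with `0 ≤ λ < λ*` is stable; and a bounded minimal
solution of `(P(λ* f))`, if it exists, is also stable. -/
theorem minimal_solutions_stable
    {X : Type*} [MeasurableSpace X] [MeasurableSpace.CountablyGenerated X]
    (m : X → MeasureTheory.Measure X) (ν : MeasureTheory.Measure X)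
    (Ω : Set X) (lam : ℝ) (φ : X → ℝ) (α M : ℝ)
    (hst : Standing m ν Ω lam φ α M)
    (f : ℝ → ℝ) (c₁ : ℝ) (hH : HypH f c₁)
    (hC1 : ContDiffOn ℝ 1 f (Set.Ici 0)) :
    (∀ l : ℝ, 0 ≤ l → l < lamStar m ν Ω f →
      ∀ u : X → ℝ, IsMinimalSol m ν Ω l f u → IsBdd ν (mClosure m Ω) u →
        IsStable m ν Ω l (derivWithin f (Set.Ici 0)) u) ∧
    (∀ u : X → ℝ, IsMinimalSol m ν Ω (lamStar m ν Ω f) f u → IsBdd ν (mClosure m Ω) u →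
      IsStable m ν Ω (lamStar m ν Ω f) (derivWithin f (Set.Ici 0)) u) :=
  minimal_solutions_stable_general m ν Ω lam φ α M hst f c₁ hH hC1
end

section
/- Strict positivity of the first linearized eigenvalue at stable solutions: Under the standing assumptions, let f ∈ C¹([0,∞)) be convex or concave and satisfy hypotheses (H), let 0 < λ < λ*, and let u be a stable bounded solution of (P(λf)). Set μ₁(u) := inf{ Q_u(v) : v ∈ L²_0(Ω_m,ν), ‖v‖_{L²(Ω,ν)} = 1 }. If there exists a nonzero nonnegative φ₁ ∈ L²_0(Ω_m,ν) with −Δ_m φ₁(x) − λ f'(u(x)) φ₁(x) = μ₁(u) φ₁(x) for ν-a.e. x ∈ Ω (i.e. the first eigenvalue of the linearized operator exists), then μ₁(u) > 0. -/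
/-!
Reversibility makes the measure `ν(dx) m_x(dy)` on `Ω_m × Ω_m` invariant under
`(x, y) ↦ (y, x)`. This gives Green's identity `∫_Ω v Δ_m w = ∫_Ω w Δ_m v` on `L²₀(Ω_m, ν)` and
writes the energy as an integral against that measure, which truncation at the levels `±k` can
only decrease; letting `k → ∞` extends stability to unbounded test functions, so `μ₁(u) ≥ 0`.

Pairing the equation of a bounded solution `w` of `(P(λ' f))` with `φ₁` gives
`∫_Ω (λ' f(w) - (λ f'(u) + μ₁) w) φ₁ = 0`. For concave `f` take `w = u`: as
`f(u) - f'(u) u ≥ f(0) > 0`, `μ₁ ≤ 0` would make the integrand at least `λ f(0) φ₁`. For convex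
`f` take `λ < λ' < λ*`: subtracting the identity for `u` from the one for `w` and using
`f(w) ≥ f(u) + f'(u) (w - u)`, `μ₁ = 0` would make the integrand at least `(λ' - λ) f(0) φ₁`.
Both contradict `∫_Ω φ₁ > 0`.
-/

open MeasureTheory Set

open ProbabilityTheory Filter
open scoped ENNReal NNReal Topology

lemma ProbabilityTheory.Kernel.IsReversible.map_swap_compProd {α : Type*} [MeasurableSpace α]
    {κ : Kernel α α} [IsFiniteKernel κ] {μ : Measure α} [IsFiniteMeasure μ]
    (h : κ.IsReversible μ) : (μ ⊗ₘ κ).map Prod.swap = μ ⊗ₘ κ := by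
  refine (Measure.ext_prod fun {s t} hs ht => ?_).symm
  rw [Measure.map_apply measurable_swap (hs.prod ht), Set.preimage_swap_prod,
    Measure.compProd_apply_prod hs ht, Measure.compProd_apply_prod ht hs, h hs ht]

lemma MeasureTheory.Integrable.integral_compProd' {α β : Type*} [MeasurableSpace α]
    [MeasurableSpace β] {μ : Measure α} [SFinite μ] {κ : Kernel α β} [IsSFiniteKernel κ]
    {F : α × β → ℝ} (hF : Integrable F (μ ⊗ₘ κ)) :
    Integrable (fun x => ∫ y, F (x, y) ∂κ x) μ := by
  simpa using (show Integrable F ((Kernel.const Unit μ ⊗ₖ Kernel.prodMkLeft Unit κ) ()) from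
    hF).integral_compProd

section EdgeMeasure

variable {X : Type*} [MeasurableSpace X] {m : X → Measure X} {ν : Measure X} {S : Set X}

noncomputable def IsRandomWalk.kernel_s15 (hm : IsRandomWalk m) : Kernel X X :=
  ⟨m, Measure.measurable_of_measurable_coe m hm.2⟩

@[simp]
lemma IsRandomWalk.kernel_apply_s15 (hm : IsRandomWalk m) (x : X) : hm.kernel_s15 x = m x := rfl

instance IsRandomWalk.isMarkovKernel (hm : IsRandomWalk m) : IsMarkovKernel hm.kernel_s15 :=
  ⟨hm.1⟩

noncomputable def edgeMeasure (hm : IsRandomWalk m) (ν : Measure X) (hS : MeasurableSet S) :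
    Measure (X × X) :=
  ν.restrict S ⊗ₘ hm.kernel_s15.restrict hS

lemma Reversible.isReversible_restrict (hm : IsRandomWalk m) (hrev : Reversible m ν)
    (hS : MeasurableSet S) [IsFiniteMeasure (ν.restrict S)] :
    (hm.kernel_s15.restrict hS).IsReversible (ν.restrict S) := by
  have flow : ∀ {A B : Set X}, MeasurableSet A → MeasurableSet B →
      ∫ x, (∫ y, (A ∩ S).indicator 1 x * (B ∩ S).indicator 1 y ∂m x) ∂ν
        = ((ν.restrict S ⊗ₘ hm.kernel_s15.restrict hS) (A ×ˢ B)).toReal := by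
    intro A B hA hB
    have hind : ∀ x, (A ∩ S).indicator 1 x * (m x (B ∩ S)).toReal
        = (A ∩ S).indicator (fun x => (m x (B ∩ S)).toReal) x := fun x => by
      by_cases hx : x ∈ A ∩ S <;> simp [hx]
    simp_rw [Measure.compProd_apply_prod hA hB, integral_const_mul,
      integral_indicator_one (hB.inter hS), Measure.real, Kernel.restrict_apply,
      IsRandomWalk.kernel_apply_s15, Measure.restrict_apply hB, Measure.restrict_restrict hA, hind]
    rw [integral_indicator (hA.inter hS), integral_toReal ((hm.2 _ (hB.inter hS)).aemeasurable)]
    filter_upwards with x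
    have := hm.1 x
    exact measure_lt_top _ _
  intro A B hA hB
  have hF : Measurable (Function.uncurry
      fun x y => (A ∩ S).indicator (1 : X → ℝ) x * (B ∩ S).indicator 1 y) :=
    ((measurable_one.indicator (hA.inter hS)).comp measurable_fst).mul
      ((measurable_one.indicator (hB.inter hS)).comp measurable_snd)
  have hF1 : ∀ x y, |(A ∩ S).indicator (1 : X → ℝ) x * (B ∩ S).indicator 1 y| ≤ 1 := by
    classical
    intro x y
    simp only [Set.indicator_apply]
    split_ifs <;> norm_num
  rw [← Measure.compProd_apply_prod hA hB, ← Measure.compProd_apply_prod hB hA,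
    ← ENNReal.toReal_eq_toReal_iff' (measure_ne_top _ _) (measure_ne_top _ _), ← flow hA hB,
    ← flow hB hA, hrev _ hF ⟨1, hF1⟩]
  simp_rw [mul_comm]

lemma edgeMeasure_map_swap (hm : IsRandomWalk m) (hrev : Reversible m ν) (hS : MeasurableSet S)
    [IsFiniteMeasure (ν.restrict S)] :
    (edgeMeasure hm ν hS).map Prod.swap = edgeMeasure hm ν hS :=
  (hrev.isReversible_restrict hm hS).map_swap_compProd

lemma map_fst_edgeMeasure_le (hm : IsRandomWalk m) (hS : MeasurableSet S)
    [IsFiniteMeasure (ν.restrict S)] :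
    (edgeMeasure hm ν hS).map Prod.fst ≤ ν.restrict S := by
  refine Measure.le_iff.2 fun A hA => ?_
  rw [Measure.map_apply measurable_fst hA, ← Set.prod_univ, edgeMeasure,
    Measure.compProd_apply_prod hA .univ]
  calc ∫⁻ x in A, hm.kernel_s15.restrict hS x Set.univ ∂ν.restrict S
      ≤ ∫⁻ _ in A, 1 ∂ν.restrict S := lintegral_mono fun x => by
        rw [Kernel.restrict_apply, Measure.restrict_apply_univ]; exact prob_le_one
    _ = ν.restrict S A := by simp

lemma map_snd_edgeMeasure_le (hm : IsRandomWalk m) (hrev : Reversible m ν) (hS : MeasurableSet S)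
    [IsFiniteMeasure (ν.restrict S)] :
    (edgeMeasure hm ν hS).map Prod.snd ≤ ν.restrict S := by
  rw [← edgeMeasure_map_swap hm hrev hS, Measure.map_map measurable_snd measurable_swap]
  exact map_fst_edgeMeasure_le hm hS

lemma MeasureTheory.MemLp.comp_fst_edgeMeasure (hm : IsRandomWalk m) (hS : MeasurableSet S)
    [IsFiniteMeasure (ν.restrict S)] {p : ℝ≥0∞} {v : X → ℝ} (hv : MemLp v p (ν.restrict S)) :
    MemLp (fun q => v q.1) p (edgeMeasure hm ν hS) :=
  (hv.mono_measure (map_fst_edgeMeasure_le hm hS)).comp_of_map measurable_fst.aemeasurable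

lemma MeasureTheory.MemLp.comp_snd_edgeMeasure (hm : IsRandomWalk m) (hrev : Reversible m ν)
    (hS : MeasurableSet S) [IsFiniteMeasure (ν.restrict S)] {p : ℝ≥0∞} {v : X → ℝ}
    (hv : MemLp v p (ν.restrict S)) :
    MemLp (fun q => v q.2) p (edgeMeasure hm ν hS) :=
  (hv.mono_measure (map_snd_edgeMeasure_le hm hrev hS)).comp_of_map measurable_snd.aemeasurable

lemma ae_deltaM_eq_setIntegral_sub (hm : IsRandomWalk m) (hrev : Reversible m ν)
    (hS : MeasurableSet S) [IsFiniteMeasure (ν.restrict S)] {w : X → ℝ}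
    (hw : Integrable w (ν.restrict S)) (hw0 : ∀ x ∉ S, w x = 0) :
    ∀ᵐ x ∂ν.restrict S, deltaM m w x = ∫ y in S, w y ∂m x - w x := by
  have hπ : Integrable (fun q => w q.2) (edgeMeasure hm ν hS) :=
    (hw.mono_measure (map_snd_edgeMeasure_le hm hrev hS)).comp_measurable measurable_snd
  filter_upwards [((Measure.integrable_compProd_iff hπ.1).1 hπ).1] with x hx
  have := hm.1 x
  have hwx : Integrable w (m x) := by
    rw [← integrableOn_iff_integrable_of_support_subset fun y hy => by_contra fun h => hy (hw0 y h)]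
    simpa [IntegrableOn, Kernel.restrict_apply] using hx
  rw [deltaM, integral_sub hwx (integrable_const _), integral_const, probReal_univ, one_smul,
    setIntegral_eq_integral_of_forall_compl_eq_zero hw0]

lemma setIntegral_mul_deltaM (hm : IsRandomWalk m) (hrev : Reversible m ν) (hS : MeasurableSet S)
    [IsFiniteMeasure (ν.restrict S)] {v w : X → ℝ} (hv : MemLp v 2 (ν.restrict S))
    (hw : MemLp w 2 (ν.restrict S)) (hw0 : ∀ x ∉ S, w x = 0) :
    ∫ x in S, v x * deltaM m w x ∂ν
      = ∫ q, v q.1 * w q.2 ∂edgeMeasure hm ν hS - ∫ x in S, v x * w x ∂ν := by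
  have hF : Integrable (fun q => v q.1 * w q.2) (edgeMeasure hm ν hS) :=
    (hv.comp_fst_edgeMeasure hm hS).integrable_mul (hw.comp_snd_edgeMeasure hm hrev hS)
  have hvw : Integrable (fun x => v x * w x) (ν.restrict S) := hv.integrable_mul hw
  rw [edgeMeasure, Measure.integral_compProd hF, ← integral_sub hF.integral_compProd' hvw]
  refine integral_congr_ae ?_
  filter_upwards [ae_deltaM_eq_setIntegral_sub hm hrev hS (hw.integrable one_le_two) hw0]
    with x hx
  simp [hx, integral_const_mul, mul_sub]

lemma setIntegral_mul_deltaM_comm (hm : IsRandomWalk m) (hrev : Reversible m ν)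
    (hS : MeasurableSet S) [IsFiniteMeasure (ν.restrict S)] {v w : X → ℝ}
    (hv : MemLp v 2 (ν.restrict S)) (hw : MemLp w 2 (ν.restrict S)) (hv0 : ∀ x ∉ S, v x = 0)
    (hw0 : ∀ x ∉ S, w x = 0) :
    ∫ x in S, v x * deltaM m w x ∂ν = ∫ x in S, w x * deltaM m v x ∂ν := by
  have hswap : MeasurePreserving Prod.swap (edgeMeasure hm ν hS) (edgeMeasure hm ν hS) :=
    ⟨measurable_swap, edgeMeasure_map_swap hm hrev hS⟩
  rw [setIntegral_mul_deltaM hm hrev hS hv hw hw0, setIntegral_mul_deltaM hm hrev hS hw hv hv0,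
    ← hswap.integral_comp MeasurableEquiv.prodComm.measurableEmbedding]
  simp only [Prod.fst_swap, Prod.snd_swap, mul_comm]

end EdgeMeasure

section Dirichlet

variable {X : Type*} [MeasurableSpace X] {m : X → Measure X} {ν : Measure X} {Ω : Set X}

lemma subset_mClosure : Ω ⊆ mClosure m Ω := Set.subset_union_left

lemma measurableSet_mBoundary (hm : IsRandomWalk m) (hΩ : MeasurableSet Ω) :
    MeasurableSet (mBoundary m Ω) :=
  hΩ.compl.inter (measurableSet_lt measurable_const (hm.2 Ω hΩ))

lemma measurableSet_mClosure (hm : IsRandomWalk m) (hΩ : MeasurableSet Ω) :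
    MeasurableSet (mClosure m Ω) :=
  hΩ.union (measurableSet_mBoundary hm hΩ)

lemma gradEnergy_eq_integral_edgeMeasure (hm : IsRandomWalk m) (hrev : Reversible m ν)
    (hS : MeasurableSet (mClosure m Ω)) [IsFiniteMeasure (ν.restrict (mClosure m Ω))]
    {v : X → ℝ} (hv : MemLp v 2 (ν.restrict (mClosure m Ω))) :
    gradEnergy m ν Ω v = 1 / 2 * ∫ q, (v q.2 - v q.1) ^ 2 ∂edgeMeasure hm ν hS := by
  have hF : Integrable (fun q => (v q.2 - v q.1) ^ 2) (edgeMeasure hm ν hS) :=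
    ((hv.comp_snd_edgeMeasure hm hrev hS).sub (hv.comp_fst_edgeMeasure hm hS)).integrable_sq
  rw [gradEnergy, edgeMeasure, Measure.integral_compProd hF]
  simp [Kernel.restrict_apply]

lemma gradEnergy_comp_le (hm : IsRandomWalk m) (hrev : Reversible m ν) (hΩ : MeasurableSet Ω)
    [IsFiniteMeasure (ν.restrict (mClosure m Ω))] {g : ℝ → ℝ} (hg : LipschitzWith 1 g)
    (hg0 : g 0 = 0) {v : X → ℝ} (hv : MemLp v 2 (ν.restrict (mClosure m Ω))) :
    gradEnergy m ν Ω (g ∘ v) ≤ gradEnergy m ν Ω v := by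
  have hS := measurableSet_mClosure hm hΩ
  rw [gradEnergy_eq_integral_edgeMeasure hm hrev hS hv,
    gradEnergy_eq_integral_edgeMeasure hm hrev hS (hg.comp_memLp hg0 hv)]
  gcongr ?_ * ?_
  refine integral_mono_of_nonneg (.of_forall fun q => sq_nonneg (g (v q.2) - g (v q.1))) ?_
    (.of_forall fun q => ?_)
  · exact ((hv.comp_snd_edgeMeasure hm hrev hS).sub (hv.comp_fst_edgeMeasure hm hS)).integrable_sq
  · simpa [Real.dist_eq, sq_abs] using
      pow_le_pow_left₀ dist_nonneg (hg.dist_le_mul (v q.2) (v q.1)) 2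

lemma MemL20.comp {v : X → ℝ} (hv : MemL20 m ν Ω v) {g : ℝ → ℝ} {K : ℝ≥0}
    (hg : LipschitzWith K g) (hg0 : g 0 = 0) : MemL20 m ν Ω (g ∘ v) := by
  obtain ⟨hvm, hv2, hvb, hv0⟩ := hv
  refine ⟨hg.continuous.measurable.comp hvm, hg.comp_memLp hg0 hv2, ?_, fun x hx => ?_⟩
  · filter_upwards [hvb] with x hx
    simp [hx, hg0]
  · simp [hv0 x hx, hg0]

lemma MemL20.setIntegral_mClosure_mul (hm : IsRandomWalk m) (hΩ : MeasurableSet Ω)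
    {v : X → ℝ} (hv : MemL20 m ν Ω v) (g : X → ℝ) :
    ∫ x in mClosure m Ω, v x * g x ∂ν = ∫ x in Ω, v x * g x ∂ν := by
  refine setIntegral_eq_of_subset_of_ae_sdiff_eq_zero
    (measurableSet_mClosure hm hΩ).nullMeasurableSet subset_mClosure ?_
  filter_upwards [(ae_restrict_iff' (measurableSet_mBoundary hm hΩ)).1 hv.2.2.1] with x hx hxΩ
  rw [hx (hxΩ.1.resolve_left hxΩ.2), zero_mul]

lemma MemL20.setIntegral_mul_deltaM_comm (hm : IsRandomWalk m) (hrev : Reversible m ν)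
    (hΩ : MeasurableSet Ω) [IsFiniteMeasure (ν.restrict (mClosure m Ω))] {v w : X → ℝ}
    (hv : MemL20 m ν Ω v) (hw : MemL20 m ν Ω w) :
    ∫ x in Ω, v x * deltaM m w x ∂ν = ∫ x in Ω, w x * deltaM m v x ∂ν := by
  rw [← hv.setIntegral_mClosure_mul hm hΩ, ← hw.setIntegral_mClosure_mul hm hΩ]
  exact _root_.setIntegral_mul_deltaM_comm hm hrev (measurableSet_mClosure hm hΩ) hv.2.1 hw.2.1
    hv.2.2.2 hw.2.2.2

lemma MemL20.integrable_restrict [IsFiniteMeasure (ν.restrict (mClosure m Ω))] {φ : X → ℝ}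
    (hφ : MemL20 m ν Ω φ) : Integrable φ (ν.restrict Ω) :=
  (hφ.2.1.integrable one_le_two).mono_measure (Measure.restrict_mono subset_mClosure le_rfl)

lemma MemL20.setIntegral_pos [IsFiniteMeasure (ν.restrict (mClosure m Ω))] {φ : X → ℝ}
    (hφ : MemL20 m ν Ω φ) (hφ0 : ∀ᵐ x ∂ν.restrict (mClosure m Ω), 0 ≤ φ x)
    (hne : ¬ φ =ᵐ[ν.restrict (mClosure m Ω)] 0) : 0 < ∫ x in Ω, φ x ∂ν := by
  refine (integral_pos_iff_support_of_nonneg_ae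
    (ae_restrict_of_ae_restrict_of_subset subset_mClosure hφ0) hφ.integrable_restrict).2
    (pos_iff_ne_zero.2 fun h => hne ?_)
  rw [EventuallyEq, mClosure, ae_restrict_union_iff]
  exact ⟨(measure_eq_zero_iff_ae_notMem.1 h).mono fun x hx => Function.notMem_support.1 hx,
    hφ.2.2.1⟩

end Dirichlet

section Stability

def clip (k a : ℝ) : ℝ := max (-k) (min k a)

lemma lipschitzWith_clip (k : ℝ) : LipschitzWith 1 (clip k) :=
  (LipschitzWith.id.const_min k).const_max (-k)

lemma clip_zero {k : ℝ} (hk : 0 ≤ k) : clip k 0 = 0 := by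
  simp [clip, hk]

lemma abs_clip_le {k : ℝ} (hk : 0 ≤ k) (a : ℝ) : |clip k a| ≤ k :=
  abs_le.2 ⟨le_max_left _ _, max_le (by linarith) (min_le_left _ _)⟩

lemma abs_clip_le_abs {k : ℝ} (hk : 0 ≤ k) (a : ℝ) : |clip k a| ≤ |a| := by
  simpa [clip_zero hk, Real.dist_eq] using (lipschitzWith_clip k).dist_le_mul a 0

lemma tendsto_clip (a : ℝ) : Tendsto (fun k : ℕ => clip k a) atTop (𝓝 a) := by
  refine tendsto_atTop_of_eventually_const (i₀ := ⌈|a|⌉₊) fun k hk => ?_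
  have h : |a| ≤ k := (Nat.le_ceil _).trans (by exact_mod_cast hk)
  rw [abs_le] at h
  simp [clip, min_eq_right h.2, max_eq_right h.1]

variable {X : Type*} [MeasurableSpace X] {m : X → Measure X} {ν : Measure X} {Ω : Set X}
  {l : ℝ} {fp : ℝ → ℝ} {u : X → ℝ}

lemma IsStable.qform_nonneg (hm : IsRandomWalk m) (hrev : Reversible m ν) (hΩ : MeasurableSet Ω)
    [IsFiniteMeasure (ν.restrict (mClosure m Ω))] (hstab : IsStable m ν Ω l fp u)
    (hV : MemLp (fun x => fp (u x)) ∞ (ν.restrict Ω)) {v : X → ℝ} (hv : MemL20 m ν Ω v) :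
    0 ≤ Qform m ν Ω l fp u v := by
  have hk : ∀ k : ℕ, l * ∫ x in Ω, fp (u x) * clip k (v x) ^ 2 ∂ν ≤ gradEnergy m ν Ω v := by
    intro k
    have hQ := hstab _ (hv.comp (lipschitzWith_clip k) (clip_zero k.cast_nonneg))
      ⟨k, .of_forall fun x => abs_clip_le k.cast_nonneg _⟩
    have hE := gradEnergy_comp_le hm hrev hΩ (lipschitzWith_clip k) (clip_zero k.cast_nonneg) hv.2.1
    rw [Qform] at hQ
    simp only [Function.comp_def] at hQ hE
    linarith
  have hvΩ : MemLp v 2 (ν.restrict Ω) :=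
    hv.2.1.mono_measure (Measure.restrict_mono subset_mClosure le_rfl)
  have hlim : Tendsto (fun k : ℕ => ∫ x in Ω, fp (u x) * clip k (v x) ^ 2 ∂ν) atTop
      (𝓝 (∫ x in Ω, fp (u x) * v x ^ 2 ∂ν)) := by
    refine tendsto_integral_of_dominated_convergence (fun x => ‖fp (u x)‖ * v x ^ 2)
      (fun k => ?_) (hvΩ.integrable_sq.mul_of_top_right hV.norm) (fun k => ?_) ?_
    · exact hV.1.mul (((lipschitzWith_clip k).continuous.comp_aestronglyMeasurable hvΩ.1).pow 2)
    · refine .of_forall fun x => ?_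
      rw [norm_mul, norm_pow, Real.norm_eq_abs, Real.norm_eq_abs, ← sq_abs (v x)]
      exact mul_le_mul_of_nonneg_left
        (pow_le_pow_left₀ (abs_nonneg _) (abs_clip_le_abs k.cast_nonneg _) 2) (abs_nonneg _)
    · exact .of_forall fun x => ((tendsto_clip (v x)).pow 2).const_mul _
  rw [Qform]
  linarith [le_of_tendsto' (hlim.const_mul l) hk]

lemma mu1_nonneg (hm : IsRandomWalk m) (hrev : Reversible m ν) (hΩ : MeasurableSet Ω)
    [IsFiniteMeasure (ν.restrict (mClosure m Ω))] (hstab : IsStable m ν Ω l fp u)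
    (hV : MemLp (fun x => fp (u x)) ∞ (ν.restrict Ω)) : 0 ≤ mu1 m ν Ω l fp u :=
  Real.sInf_nonneg fun _ ⟨_, hv, _, hr⟩ => hr ▸ hstab.qform_nonneg hm hrev hΩ hV hv

end Stability

section Tangent

variable {S : Set ℝ} {f : ℝ → ℝ} {s t : ℝ}

lemma ConvexOn.add_derivWithin_mul_sub_le (hf : ConvexOn ℝ S f) (hs : s ∈ S) (ht : t ∈ S)
    (hd : DifferentiableWithinAt ℝ f S s) : f s + derivWithin f S s * (t - s) ≤ f t := by
  rcases lt_trichotomy s t with h | rfl | h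
  · have := hf.derivWithin_le_slope hs ht h hd
    rw [slope_def_field, le_div_iff₀ (sub_pos.2 h)] at this
    linarith
  · simp
  · have := hf.slope_le_derivWithin ht hs h hd
    rw [slope_def_field, div_le_iff₀ (sub_pos.2 h)] at this
    linarith

lemma ConcaveOn.le_add_derivWithin_mul_sub (hf : ConcaveOn ℝ S f) (hs : s ∈ S) (ht : t ∈ S)
    (hd : DifferentiableWithinAt ℝ f S s) : f t ≤ f s + derivWithin f S s * (t - s) := by
  rcases lt_trichotomy s t with h | rfl | h
  · have := hf.slope_le_derivWithin hs ht h hd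
    rw [slope_def_field, div_le_iff₀ (sub_pos.2 h)] at this
    linarith
  · simp
  · have := hf.derivWithin_le_slope ht hs h hd
    rw [slope_def_field, le_div_iff₀ (sub_pos.2 h)] at this
    linarith

end Tangent

section Positivity

variable {X : Type*} [MeasurableSpace X] {μ : Measure X}

lemma MeasureTheory.MemLp.comp_of_continuousOn_Ici {g : ℝ → ℝ} (hg : ContinuousOn g (Set.Ici 0))
    {u : X → ℝ} (hu : AEStronglyMeasurable u μ) {C : ℝ} (hC : ∀ᵐ x ∂μ, u x ∈ Set.Icc 0 C) :
    MemLp (fun x => g (u x)) ∞ μ := by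
  obtain ⟨B, hB⟩ := isCompact_Icc.exists_bound_of_continuousOn (hg.mono Set.Icc_subset_Ici_self)
  have hg' : Continuous fun s => g (max s 0) :=
    hg.comp_continuous (continuous_id.max continuous_const) fun s => le_max_right s 0
  refine memLp_top_of_bound ?_ B (hC.mono fun x hx => hB _ hx)
  refine (hg'.comp_aestronglyMeasurable hu).congr (hC.mono fun x hx => ?_)
  simp [max_eq_left hx.1]

lemma integral_pos_of_const_mul_le {φ h : X → ℝ} {a : ℝ} (ha : 0 < a)
    (hφ : 0 < ∫ x, φ x ∂μ) (hh : Integrable h μ) (hle : ∀ᵐ x ∂μ, a * φ x ≤ h x) :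
    0 < ∫ x, h x ∂μ := by
  refine (mul_pos ha hφ).trans_le ?_
  rw [← integral_const_mul]
  exact integral_mono_ae ((Integrable.of_integral_ne_zero hφ.ne').const_mul a) hh hle

variable {f : ℝ → ℝ} {l c : ℝ} {u φ : X → ℝ}

lemma pos_of_concaveOn_of_integral_eq_zero (hf : ConcaveOn ℝ (Set.Ici 0) f)
    (hfd : DifferentiableOn ℝ f (Set.Ici 0)) (hf0 : 0 < f 0) (hl : 0 < l)
    (hu : ∀ᵐ x ∂μ, 0 ≤ u x) (hφ0 : ∀ᵐ x ∂μ, 0 ≤ φ x) (hφ : 0 < ∫ x, φ x ∂μ)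
    (hint : Integrable (fun x => (l * f (u x) - (l * derivWithin f (Set.Ici 0) (u x) + c) * u x)
      * φ x) μ)
    (heq : ∫ x, (l * f (u x) - (l * derivWithin f (Set.Ici 0) (u x) + c) * u x) * φ x ∂μ = 0) :
    0 < c := by
  by_contra! hc
  refine (integral_pos_of_const_mul_le (mul_pos hl hf0) hφ hint ?_).ne' heq
  filter_upwards [hu, hφ0] with x hux hφx
  have htan := hf.le_add_derivWithin_mul_sub hux (Set.mem_Ici.2 le_rfl) (hfd _ hux)
  have hcu : 0 ≤ -c * u x := mul_nonneg (neg_nonneg.2 hc) hux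
  exact mul_le_mul_of_nonneg_right (by nlinarith) hφx

lemma pos_of_convexOn_of_integral_eq_zero (hf : ConvexOn ℝ (Set.Ici 0) f)
    (hfd : DifferentiableOn ℝ f (Set.Ici 0)) (hmono : MonotoneOn f (Set.Ici 0)) (hf0 : 0 < f 0)
    {l' : ℝ} (hl : 0 < l) (hll' : l < l') (hc : 0 ≤ c) {w : X → ℝ}
    (hu : ∀ᵐ x ∂μ, 0 ≤ u x) (hw : ∀ᵐ x ∂μ, 0 ≤ w x) (hφ0 : ∀ᵐ x ∂μ, 0 ≤ φ x)
    (hφ : 0 < ∫ x, φ x ∂μ)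
    (hint_u : Integrable (fun x => (l * f (u x) - (l * derivWithin f (Set.Ici 0) (u x) + c) * u x)
      * φ x) μ)
    (heq_u : ∫ x, (l * f (u x) - (l * derivWithin f (Set.Ici 0) (u x) + c) * u x) * φ x ∂μ = 0)
    (hint_w : Integrable (fun x => (l' * f (w x) - (l * derivWithin f (Set.Ici 0) (u x) + c) * w x)
      * φ x) μ)
    (heq_w : ∫ x, (l' * f (w x) - (l * derivWithin f (Set.Ici 0) (u x) + c) * w x) * φ x ∂μ = 0) :
    0 < c := by
  refine hc.lt_of_ne fun hc0 => ?_
  subst hc0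
  have hdiff := integral_sub hint_w hint_u
  rw [heq_u, heq_w, sub_zero] at hdiff
  refine (integral_pos_of_const_mul_le (mul_pos (sub_pos.2 hll') hf0) hφ (hint_w.sub hint_u) ?_).ne'
    hdiff
  filter_upwards [hu, hw, hφ0] with x hux hwx hφx
  have htan := hf.add_derivWithin_mul_sub_le hux hwx (hfd _ hux)
  have hfw := hmono (Set.mem_Ici.2 le_rfl) hwx hwx
  rw [Pi.sub_apply, ← sub_mul]
  exact mul_le_mul_of_nonneg_right (by nlinarith) hφx

end Positivity

section Pairing

variable {X : Type*} [MeasurableSpace X] {m : X → Measure X} {ν : Measure X} {Ω : Set X}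

lemma IsSol.ae_nonneg {l : ℝ} {f : ℝ → ℝ} {u : X → ℝ} (hu : IsSol m ν Ω l f u) :
    ∀ᵐ x ∂ν.restrict Ω, 0 ≤ u x :=
  ae_restrict_of_ae_restrict_of_subset subset_mClosure hu.2.1

lemma IsSol.memLp_top_comp {l : ℝ} {f : ℝ → ℝ} {u : X → ℝ} (hu : IsSol m ν Ω l f u)
    (hub : IsBdd ν (mClosure m Ω) u) {g : ℝ → ℝ} (hg : ContinuousOn g (Set.Ici 0)) :
    MemLp (fun x => g (u x)) ∞ (ν.restrict Ω) := by
  obtain ⟨C, hC⟩ := hub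
  refine .comp_of_continuousOn_Ici hg hu.1.1.aestronglyMeasurable (C := C) ?_
  filter_upwards [hu.ae_nonneg, ae_restrict_of_ae_restrict_of_subset subset_mClosure hC]
    with x h0 hx
  exact ⟨h0, (le_abs_self _).trans hx⟩

lemma exists_lt_of_lt_lamStar {f : ℝ → ℝ} {l : ℝ} (hl0 : 0 ≤ l) {u : X → ℝ}
    (hu : IsSol m ν Ω l f u) (hub : IsBdd ν (mClosure m Ω) u) (hl : l < lamStar m ν Ω f) :
    ∃ l', l < l' ∧ ∃ w, IsSol m ν Ω l' f w ∧ IsBdd ν (mClosure m Ω) w :=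
  let ⟨l', ⟨_, hw⟩, hll'⟩ := exists_lt_of_lt_csSup (s := {l' | 0 ≤ l' ∧ ∃ w,
    IsSol m ν Ω l' f w ∧ IsBdd ν (mClosure m Ω) w}) ⟨l, hl0, u, hu, hub⟩ hl
  ⟨l', hll', hw⟩

lemma setIntegral_pairing_eq_zero (hm : IsRandomWalk m) (hrev : Reversible m ν)
    (hΩ : MeasurableSet Ω) [IsFiniteMeasure (ν.restrict (mClosure m Ω))] {φ w g V : X → ℝ}
    (hφ : MemL20 m ν Ω φ) (hw : MemL20 m ν Ω w)
    (hφeq : ∀ᵐ x ∂ν.restrict Ω, -deltaM m φ x = V x * φ x)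
    (hweq : ∀ᵐ x ∂ν.restrict Ω, -deltaM m w x = g x) (hg : MemLp g ∞ (ν.restrict Ω))
    (hVw : MemLp (fun x => V x * w x) ∞ (ν.restrict Ω)) :
    ∫ x in Ω, (g x - V x * w x) * φ x ∂ν = 0 := by
  have hL : ∫ x in Ω, φ x * deltaM m w x ∂ν = -∫ x in Ω, g x * φ x ∂ν := by
    rw [← integral_neg]
    refine integral_congr_ae ?_
    filter_upwards [hweq] with x hx
    linear_combination (-φ x) * hx
  have hR : ∫ x in Ω, w x * deltaM m φ x ∂ν = -∫ x in Ω, V x * w x * φ x ∂ν := by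
    rw [← integral_neg]
    refine integral_congr_ae ?_
    filter_upwards [hφeq] with x hx
    linear_combination (-w x) * hx
  have green := hφ.setIntegral_mul_deltaM_comm hm hrev hΩ hw
  rw [hL, hR, neg_inj] at green
  have hgφ : Integrable (fun x => g x * φ x) (ν.restrict Ω) :=
    hφ.integrable_restrict.mul_of_top_right hg
  have hVwφ : Integrable (fun x => V x * w x * φ x) (ν.restrict Ω) :=
    hφ.integrable_restrict.mul_of_top_right hVw
  simp_rw [sub_mul]
  rw [integral_sub hgφ hVwφ, green, sub_self]

lemma IsSol.integrable_and_setIntegral_pairing_eq_zero (hm : IsRandomWalk m) (hrev : Reversible m ν)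
    (hΩ : MeasurableSet Ω) [IsFiniteMeasure (ν.restrict (mClosure m Ω))] {l : ℝ}
    {f : ℝ → ℝ} (hf : ContinuousOn f (Set.Ici 0)) {w φ V : X → ℝ} (hw : IsSol m ν Ω l f w)
    (hwb : IsBdd ν (mClosure m Ω) w) (hφ : MemL20 m ν Ω φ)
    (hφeq : ∀ᵐ x ∂ν.restrict Ω, -deltaM m φ x = V x * φ x) (hV : MemLp V ∞ (ν.restrict Ω)) :
    Integrable (fun x => (l * f (w x) - V x * w x) * φ x) (ν.restrict Ω) ∧
      ∫ x in Ω, (l * f (w x) - V x * w x) * φ x ∂ν = 0 := by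
  have hg : MemLp (fun x => l * f (w x)) ∞ (ν.restrict Ω) :=
    (hw.memLp_top_comp hwb hf).const_mul l
  have hVw : MemLp (fun x => V x * w x) ∞ (ν.restrict Ω) :=
    (hw.memLp_top_comp hwb continuousOn_id).mul hV
  exact ⟨hφ.integrable_restrict.mul_of_top_right (hg.sub hVw),
    _root_.setIntegral_pairing_eq_zero hm hrev hΩ hφ hw.1 hφeq hw.2.2 hg hVw⟩

end Pairing

theorem first_linearized_eigenvalue_positive_general
    {X : Type*} [MeasurableSpace X]
    (m : X → MeasureTheory.Measure X) (ν : MeasureTheory.Measure X)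
    (Ω : Set X) (lam : ℝ) (φ : X → ℝ) (α M : ℝ)
    (hst : Standing m ν Ω lam φ α M)
    (f : ℝ → ℝ) (c₁ : ℝ) (hH : HypH f c₁)
    (hC1 : ContDiffOn ℝ 1 f (Set.Ici 0))
    (hcc : ConvexOn ℝ (Set.Ici 0) f ∨ ConcaveOn ℝ (Set.Ici 0) f)
    (l : ℝ) (hl0 : 0 < l) (hl : l < lamStar m ν Ω f)
    (u : X → ℝ) (hu : IsSol m ν Ω l f u) (hub : IsBdd ν (mClosure m Ω) u)
    (hstab : IsStable m ν Ω l (derivWithin f (Set.Ici 0)) u)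
    (φ₁ : X → ℝ) (hφ₁mem : MemL20 m ν Ω φ₁)
    (hφ₁ne : ¬ (φ₁ =ᵐ[ν.restrict (mClosure m Ω)] fun _ => (0 : ℝ)))
    (hφ₁nn : ∀ᵐ x ∂(ν.restrict (mClosure m Ω)), 0 ≤ φ₁ x)
    (hφ₁eig : ∀ᵐ x ∂(ν.restrict Ω),
      -(deltaM m φ₁ x) - l * derivWithin f (Set.Ici 0) (u x) * φ₁ x
        = mu1 m ν Ω l (derivWithin f (Set.Ici 0)) u * φ₁ x) :
    0 < mu1 m ν Ω l (derivWithin f (Set.Ici 0)) u := by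
  obtain ⟨hm, hrev, -, hΩ, -, -, -, hfin, -⟩ := hst
  have := isFiniteMeasure_restrict.2 hfin.ne
  set μ₁ := mu1 m ν Ω l (derivWithin f (Set.Ici 0)) u
  have hfd : DifferentiableOn ℝ f (Set.Ici 0) := hC1.differentiableOn one_ne_zero
  have hV := hu.memLp_top_comp hub (hC1.continuousOn_derivWithin (uniqueDiffOn_Ici 0) le_rfl)
  have hφ₁eq : ∀ᵐ x ∂ν.restrict Ω,
      -deltaM m φ₁ x = (l * derivWithin f (Set.Ici 0) (u x) + μ₁) * φ₁ x := by
    filter_upwards [hφ₁eig] with x hx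
    linear_combination hx
  have pairing := fun {l' w} (hw : IsSol m ν Ω l' f w) (hwb : IsBdd ν (mClosure m Ω) w) =>
    hw.integrable_and_setIntegral_pairing_eq_zero hm hrev hΩ hH.1 hwb hφ₁mem hφ₁eq
      ((hV.const_mul l).add (memLp_top_const μ₁))
  have hφ₁pos := hφ₁mem.setIntegral_pos hφ₁nn hφ₁ne
  have hφ₁0 := ae_restrict_of_ae_restrict_of_subset (subset_mClosure (m := m)) hφ₁nn
  obtain ⟨hint_u, heq_u⟩ := pairing hu hub
  rcases hcc with hconv | hconc
  · obtain ⟨l', hll', w, hw, hwb⟩ := exists_lt_of_lt_lamStar hl0.le hu hub hl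
    obtain ⟨hint_w, heq_w⟩ := pairing hw hwb
    exact pos_of_convexOn_of_integral_eq_zero hconv hfd hH.2.1 hH.2.2.1 hl0 hll'
      (mu1_nonneg hm hrev hΩ hstab hV) hu.ae_nonneg hw.ae_nonneg hφ₁0 hφ₁pos
      hint_u heq_u hint_w heq_w
  · exact pos_of_concaveOn_of_integral_eq_zero hconc hfd hH.2.2.1 hl0 hu.ae_nonneg hφ₁0
      hφ₁pos hint_u heq_u

/-- **Strict positivity of the first linearized eigenvalue at stable solutions**: for `f`
convex or concave satisfying (H), `0 < λ < λ*` and `u` a stable bounded solution of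
`(P(λ f))`, if the first eigenvalue `μ₁(u)` of the linearized operator is attained by a
nonzero nonnegative eigenfunction, then `μ₁(u) > 0`. -/
theorem first_linearized_eigenvalue_positive
    {X : Type*} [MeasurableSpace X] [MeasurableSpace.CountablyGenerated X]
    (m : X → MeasureTheory.Measure X) (ν : MeasureTheory.Measure X)
    (Ω : Set X) (lam : ℝ) (φ : X → ℝ) (α M : ℝ)
    (hst : Standing m ν Ω lam φ α M)
    (f : ℝ → ℝ) (c₁ : ℝ) (hH : HypH f c₁)
    (hC1 : ContDiffOn ℝ 1 f (Set.Ici 0))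
    (hcc : ConvexOn ℝ (Set.Ici 0) f ∨ ConcaveOn ℝ (Set.Ici 0) f)
    (l : ℝ) (hl0 : 0 < l) (hl : l < lamStar m ν Ω f)
    (u : X → ℝ) (hu : IsSol m ν Ω l f u) (hub : IsBdd ν (mClosure m Ω) u)
    (hstab : IsStable m ν Ω l (derivWithin f (Set.Ici 0)) u)
    (φ₁ : X → ℝ) (hφ₁mem : MemL20 m ν Ω φ₁)
    (hφ₁ne : ¬ (φ₁ =ᵐ[ν.restrict (mClosure m Ω)] fun _ => (0 : ℝ)))
    (hφ₁nn : ∀ᵐ x ∂(ν.restrict (mClosure m Ω)), 0 ≤ φ₁ x)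
    (hφ₁eig : ∀ᵐ x ∂(ν.restrict Ω),
      -(deltaM m φ₁ x) - l * derivWithin f (Set.Ici 0) (u x) * φ₁ x
        = mu1 m ν Ω l (derivWithin f (Set.Ici 0)) u * φ₁ x) :
    0 < mu1 m ν Ω l (derivWithin f (Set.Ici 0)) u :=
  first_linearized_eigenvalue_positive_general m ν Ω lam φ α M hst f c₁ hH hC1 hcc l hl0 hl u hu hub
    hstab φ₁ hφ₁mem hφ₁ne hφ₁nn hφ₁eig
end
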